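/- arXiv:1209.5997 — 5 statements merged into one kernel-verified Lean document; each statement's English description precedes it below -/
import Mathlib

section
/- Let x ∈ ℤ⁶ be a primitive vector with ⟨x,x⟩ = −(2k+1) for some integer k > 0. Then there exists B ∈ O(T) with B·x = (1, −k, 0, 0, 1, 0). -/
open Matrix

/-- Gram matrix of the lattice `T = U ⊥ U ⊥ ⟨-1⟩ ⊥ ⟨-1⟩` on `ℤ⁶`. -/
def G6 : Matrix (Fin 6) (Fin 6) ℤ :=
  !![0, 1, 0, 0, 0, 0;
     1, 0, 0, 0, 0, 0;
     0, 0, 0, 1, 0, 0;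
     0, 0, 1, 0, 0, 0;
     0, 0, 0, 0, -1, 0;
     0, 0, 0, 0, 0, -1]

/-- The bilinear form `⟨x, y⟩ = xᵀ G y` of the lattice `T`. -/
def bilT (x y : Fin 6 → ℤ) : ℤ := x ⬝ᵥ G6.mulVec y

/-- Membership in the orthogonal group `O(T)`: an integral matrix `B` with unit
determinant (so `B ∈ GL(6, ℤ)`) satisfying `Bᵀ G B = G`. -/
def MemOT (B : Matrix (Fin 6) (Fin 6) ℤ) : Prop :=
  IsUnit B.det ∧ Bᵀ * G6 * B = G6

/-- A vector of `ℤ⁶` is primitive if the gcd of its coordinates is `1`. -/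
def IsPrimitive (x : Fin 6 → ℤ) : Prop := Finset.univ.gcd x = 1

/-! ### Auxiliary material -/

@[simp] lemma my_cons_val_five {α : Type*} {m : ℕ} (x : α) (u : Fin (m+5) → α) :
    vecCons x u 5 = vecHead (vecTail (vecTail (vecTail (vecTail u)))) := rfl

/-- Eichler transvection `E(e₁, v)` with `v = s e₃ + t e₄ + u e₅ + w e₆`,
`m = q(v)`. -/
def Em1 (s t u w m : ℤ) : Matrix (Fin 6) (Fin 6) ℤ :=
  !![1,-m,t,s,-u,-w; 0,1,0,0,0,0; 0,-s,1,0,0,0; 0,-t,0,1,0,0; 0,-u,0,0,1,0; 0,-w,0,0,0,1]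

/-- Eichler transvection `E(e₃, v)` with `v = s e₁ + t e₂ + u e₅ + w e₆`. -/
def Em3 (s t u w m : ℤ) : Matrix (Fin 6) (Fin 6) ℤ :=
  !![1,0,0,-s,0,0; 0,1,0,-t,0,0; t,s,1,-m,-u,-w; 0,0,0,1,0,0; 0,0,0,-u,1,0; 0,0,0,-w,0,1]

def P12 : Matrix (Fin 6) (Fin 6) ℤ :=
  !![0,1,0,0,0,0; 1,0,0,0,0,0; 0,0,1,0,0,0; 0,0,0,1,0,0; 0,0,0,0,1,0; 0,0,0,0,0,1]

/-- Swap of the two hyperbolic planes. -/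
def SwU : Matrix (Fin 6) (Fin 6) ℤ :=
  !![0,0,1,0,0,0; 0,0,0,1,0,0; 1,0,0,0,0,0; 0,1,0,0,0,0; 0,0,0,0,1,0; 0,0,0,0,0,1]

/-- `(a,b,c,d,e,f) ↦ (d,c,b,a,e,f)`. -/
def WU : Matrix (Fin 6) (Fin 6) ℤ :=
  !![0,0,0,1,0,0; 0,0,1,0,0,0; 0,1,0,0,0,0; 1,0,0,0,0,0; 0,0,0,0,1,0; 0,0,0,0,0,1]

/-- `-1` on the first hyperbolic plane. -/
def NU : Matrix (Fin 6) (Fin 6) ℤ :=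
  !![-1,0,0,0,0,0; 0,-1,0,0,0,0; 0,0,1,0,0,0; 0,0,0,1,0,0; 0,0,0,0,1,0; 0,0,0,0,0,1]

lemma Em1_act (s t u w m : ℤ) (x : Fin 6 → ℤ) :
    (Em1 s t u w m).mulVec x = ![x 0 - m * x 1 + t * x 2 + s * x 3 - u * x 4 - w * x 5,
      x 1, x 2 - s * x 1, x 3 - t * x 1, x 4 - u * x 1, x 5 - w * x 1] := by
  ext i
  fin_cases i <;>
    simp [Em1, mulVec, dotProduct, Fin.sum_univ_six, vecHead, vecTail] <;> ring

lemma Em3_act (s t u w m : ℤ) (x : Fin 6 → ℤ) :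
    (Em3 s t u w m).mulVec x = ![x 0 - s * x 3, x 1 - t * x 3,
      x 2 + t * x 0 + s * x 1 - m * x 3 - u * x 4 - w * x 5,
      x 3, x 4 - u * x 3, x 5 - w * x 3] := by
  ext i
  fin_cases i <;>
    simp [Em3, mulVec, dotProduct, Fin.sum_univ_six, vecHead, vecTail] <;> ring

lemma P12_act (x : Fin 6 → ℤ) :
    P12.mulVec x = ![x 1, x 0, x 2, x 3, x 4, x 5] := by
  ext i
  fin_cases i <;> simp [P12, mulVec, dotProduct, Fin.sum_univ_six, vecHead, vecTail]

lemma SwU_act (x : Fin 6 → ℤ) :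
    SwU.mulVec x = ![x 2, x 3, x 0, x 1, x 4, x 5] := by
  ext i
  fin_cases i <;> simp [SwU, mulVec, dotProduct, Fin.sum_univ_six, vecHead, vecTail]

lemma WU_act (x : Fin 6 → ℤ) :
    WU.mulVec x = ![x 3, x 2, x 1, x 0, x 4, x 5] := by
  ext i
  fin_cases i <;> simp [WU, mulVec, dotProduct, Fin.sum_univ_six, vecHead, vecTail]

lemma NU_act (x : Fin 6 → ℤ) :
    NU.mulVec x = ![-x 0, -x 1, x 2, x 3, x 4, x 5] := by
  ext i
  fin_cases i <;> simp [NU, mulVec, dotProduct, Fin.sum_univ_six, vecHead, vecTail]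

set_option maxHeartbeats 3200000 in
lemma MemOT_Em1 (s t u w m : ℤ) (h : u^2 + w^2 = 2*(s*t) - 2*m) : MemOT (Em1 s t u w m) := by
  constructor
  · have h1 : Em1 s t u w m * Em1 (-s) (-t) (-u) (-w) m = 1 := by
      ext i j
      fin_cases i <;> fin_cases j <;>
        simp [Em1, Matrix.mul_apply, Fin.sum_univ_six, vecHead, vecTail, Matrix.one_apply] <;>
          first | ring1 | linear_combination h | linear_combination -h |
            linear_combination 2*h | linear_combination -2*h
    exact Matrix.isUnit_det_of_right_inverse h1
  · ext i j
    fin_cases i <;> fin_cases j <;>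
      simp [Em1, G6, Matrix.mul_apply, Fin.sum_univ_six, vecHead, vecTail,
        Matrix.transpose_apply] <;>
        first | ring1 | linear_combination h | linear_combination -h |
          linear_combination 2*h | linear_combination -2*h

set_option maxHeartbeats 3200000 in
lemma MemOT_Em3 (s t u w m : ℤ) (h : u^2 + w^2 = 2*(s*t) - 2*m) : MemOT (Em3 s t u w m) := by
  constructor
  · have h1 : Em3 s t u w m * Em3 (-s) (-t) (-u) (-w) m = 1 := by
      ext i j
      fin_cases i <;> fin_cases j <;>
        simp [Em3, Matrix.mul_apply, Fin.sum_univ_six, vecHead, vecTail, Matrix.one_apply] <;>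
          first | ring1 | linear_combination h | linear_combination -h |
            linear_combination 2*h | linear_combination -2*h
    exact Matrix.isUnit_det_of_right_inverse h1
  · ext i j
    fin_cases i <;> fin_cases j <;>
      simp [Em3, G6, Matrix.mul_apply, Fin.sum_univ_six, vecHead, vecTail,
        Matrix.transpose_apply] <;>
        first | ring1 | linear_combination h | linear_combination -h |
          linear_combination 2*h | linear_combination -2*h

set_option maxHeartbeats 1600000 in
lemma MemOT_P12 : MemOT P12 := by
  constructor
  · exact Matrix.isUnit_det_of_right_inverse (by decide : P12 * P12 = 1)
  · decide

set_option maxHeartbeats 1600000 in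
lemma MemOT_SwU : MemOT SwU := by
  constructor
  · exact Matrix.isUnit_det_of_right_inverse (by decide : SwU * SwU = 1)
  · decide

set_option maxHeartbeats 1600000 in
lemma MemOT_WU : MemOT WU := by
  constructor
  · exact Matrix.isUnit_det_of_right_inverse (by decide : WU * WU = 1)
  · decide

set_option maxHeartbeats 1600000 in
lemma MemOT_NU : MemOT NU := by
  constructor
  · exact Matrix.isUnit_det_of_right_inverse (by decide : NU * NU = 1)
  · decide

lemma MemOT_one : MemOT (1 : Matrix (Fin 6) (Fin 6) ℤ) := by
  refine ⟨by simp, by simp⟩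

lemma MemOT_mul {A B : Matrix (Fin 6) (Fin 6) ℤ} (hA : MemOT A) (hB : MemOT B) :
    MemOT (A * B) := by
  constructor
  · rw [Matrix.det_mul]; exact hA.1.mul hB.1
  · have : (A * B)ᵀ * G6 * (A * B) = Bᵀ * (Aᵀ * G6 * A) * B := by
      rw [Matrix.transpose_mul]
      simp only [Matrix.mul_assoc]
    rw [this, hA.2]
    have : Bᵀ * G6 * B = G6 := hB.2
    simpa [Matrix.mul_assoc] using this

lemma bilT_mulVec {B : Matrix (Fin 6) (Fin 6) ℤ} (hB : MemOT B) (x y : Fin 6 → ℤ) :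
    bilT (B.mulVec x) (B.mulVec y) = bilT x y := by
  unfold bilT
  rw [Matrix.mulVec_mulVec, Matrix.dotProduct_mulVec, ← Matrix.vecMul_transpose,
    Matrix.vecMul_vecMul, ← Matrix.mul_assoc, hB.2, ← Matrix.dotProduct_mulVec]

lemma IsPrimitive.mulVecOT {B : Matrix (Fin 6) (Fin 6) ℤ} (hB : MemOT B)
    {x : Fin 6 → ℤ} (hx : IsPrimitive x) : IsPrimitive (B.mulVec x) := by
  have hinv : B⁻¹ * B = 1 := Matrix.nonsing_inv_mul B hB.1
  set g : ℤ := Finset.univ.gcd (B.mulVec x) with hg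
  have hgdvd : ∀ i, g ∣ (B.mulVec x) i := fun i => Finset.gcd_dvd (Finset.mem_univ i)
  have hxj : ∀ j, g ∣ x j := by
    intro j
    have hxeq : x = B⁻¹.mulVec (B.mulVec x) := by
      rw [Matrix.mulVec_mulVec, hinv, Matrix.one_mulVec]
    rw [hxeq]
    show g ∣ ∑ i, B⁻¹ j i * (B.mulVec x) i
    exact Finset.dvd_sum fun i _ => Dvd.dvd.mul_left (hgdvd i) _
  have hdvd1 : g ∣ 1 := by
    rw [show (1 : ℤ) = Finset.univ.gcd x from hx.symm]
    exact Finset.dvd_gcd fun i _ => hxj i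
  have hpos : 0 ≤ g := Int.nonneg_of_normalize_eq_self Finset.normalize_gcd
  rcases Int.isUnit_iff.mp (isUnit_of_dvd_one hdvd1) with h1 | h1
  · exact h1
  · omega

lemma odd_add_of_odd_sq {e f : ℤ} (h : Odd (e^2 + f^2)) : Odd (e + f) := by
  rcases Int.even_or_odd (e + f) with he | ho
  · exfalso
    obtain ⟨r, hr⟩ := he
    have : Even (e^2 + f^2) := ⟨2*r^2 - e*f, by linear_combination (e + f + 2*r) * hr⟩
    exact (Int.not_odd_iff_even.mpr this) h
  · exact ho

lemma exists_m (s t u w : ℤ) (h : Even (u + w)) :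
    ∃ m : ℤ, u^2 + w^2 = 2*(s*t) - 2*m := by
  obtain ⟨r, hr⟩ := h
  exact ⟨s*t - (2*r^2 - u*w), by linear_combination (u + w + 2*r) * hr⟩

lemma odd_dvd_of_dvd_two_mul {g e : ℤ} (hg : Odd g) (h : g ∣ 2 * e) : g ∣ e := by
  obtain ⟨r, hr⟩ := hg
  have hco : IsCoprime g 2 := ⟨1, -r, by rw [hr]; ring⟩
  exact hco.dvd_of_dvd_mul_left h

lemma bez2 (a b : ℤ) : ∃ p q : ℤ, p * a + q * b = (Int.gcd a b : ℤ) :=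
  ⟨Int.gcdA a b, Int.gcdB a b, by rw [Int.gcd_eq_gcd_ab a b]; ring⟩

lemma bez4 (a b c d : ℤ) :
    ∃ p q r s : ℤ, p*a + q*b + r*c + s*d = (Int.gcd (Int.gcd a b) (Int.gcd c d) : ℤ) := by
  obtain ⟨α, β, hab⟩ := bez2 a b
  obtain ⟨γ, δ, hcd⟩ := bez2 c d
  obtain ⟨μ, ν, h⟩ := bez2 (Int.gcd a b : ℤ) (Int.gcd c d : ℤ)
  refine ⟨μ*α, μ*β, ν*γ, ν*δ, ?_⟩
  rw [← h, ← hab, ← hcd]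
  ring

/-- If `M` and `c` are coprime and `b ≠ 0`, then some `c + M k` is coprime to `b`. -/
lemma coprime_shift (b M c : ℤ) (hb : b ≠ 0) (h : IsCoprime M c) :
    ∃ k : ℤ, IsCoprime b (c + M * k) := by
  classical
  set S : Finset ℕ := b.natAbs.primeFactors.filter (fun p : ℕ => ¬ ((p:ℤ) ∣ c)) with hS
  set k : ℤ := ∏ p ∈ S, (p : ℤ) with hk
  refine ⟨k, ?_⟩
  rw [Int.isCoprime_iff_gcd_eq_one]
  by_contra hne
  obtain ⟨p, pp, pdvd⟩ := Nat.exists_prime_and_dvd hne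
  have hpb : (p:ℤ) ∣ b :=
    dvd_trans (Int.natCast_dvd_natCast.mpr pdvd) (Int.gcd_dvd_left _ _)
  have hpcMk : (p:ℤ) ∣ c + M * k :=
    dvd_trans (Int.natCast_dvd_natCast.mpr pdvd) (Int.gcd_dvd_right _ _)
  have ppz : Prime (p:ℤ) := Int.prime_iff_natAbs_prime.mpr (by simpa using pp)
  by_cases hpc : (p:ℤ) ∣ c
  · have hpMk : (p:ℤ) ∣ M * k := by
      have := hpcMk.sub hpc
      simpa using this
    rcases (ppz.dvd_mul).mp hpMk with hM | hK
    · exact ppz.not_unit (h.isUnit_of_dvd' hM hpc)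
    · rw [hk] at hK
      obtain ⟨q, hq, hdq⟩ := (Prime.dvd_finset_prod_iff ppz (fun n : ℕ => (n:ℤ))).mp hK
      rw [hS] at hq
      have hq2 := Finset.mem_filter.mp hq
      have hqprime : Nat.Prime q := Nat.prime_of_mem_primeFactors hq2.1
      have : p = q := by
        have := Int.natCast_dvd_natCast.mp hdq
        exact ((Nat.prime_dvd_prime_iff_eq pp hqprime).mp this)
      exact hq2.2 (this ▸ hpc)
  · have hpfilter : p ∈ S := by
      rw [hS]
      refine Finset.mem_filter.mpr ⟨?_, hpc⟩
      refine Nat.mem_primeFactors.mpr ⟨pp, ?_, by simpa using hb⟩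
      exact Int.natCast_dvd_natCast.mp (Int.dvd_natAbs.mpr hpb)
    have hpk : (p:ℤ) ∣ k := by
      rw [hk]
      exact Finset.dvd_prod_of_mem _ hpfilter
    have : (p:ℤ) ∣ c := by
      have := hpcMk.sub (Dvd.dvd.mul_left hpk M)
      simpa using this
    exact hpc this

lemma bilT_expand (x : Fin 6 → ℤ) :
    bilT x x = 2*(x 0 * x 1) + 2*(x 2 * x 3) - x 4^2 - x 5^2 := by
  simp [bilT, G6, mulVec, dotProduct, Fin.sum_univ_six, vecHead, vecTail]
  ring

/-- Any common divisor of all coordinates of a primitive vector is a unit. -/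
lemma IsPrimitive.isUnit_of_dvd {x : Fin 6 → ℤ} (hx : IsPrimitive x) {q : ℤ}
    (h : ∀ i, q ∣ x i) : IsUnit q := by
  have : q ∣ Finset.univ.gcd x := Finset.dvd_gcd fun i _ => h i
  rw [hx] at this
  exact isUnit_of_dvd_one this

lemma emod_lt_abs (a : ℤ) {b : ℤ} (h : b ≠ 0) : a % b < |b| := by
  rcases h.lt_or_gt with hb | hb
  · have h2 : a % (-b) < -b := Int.emod_lt_of_pos a (by omega)
    rw [Int.emod_neg] at h2
    rwa [abs_of_neg hb]
  · rw [abs_of_pos hb]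
    exact Int.emod_lt_of_pos a hb

/-- Phase I: kill the fourth coordinate. -/
lemma kill3 : ∀ n : ℕ, ∀ x : Fin 6 → ℤ, (x 3).natAbs ≤ n →
    ∃ B, MemOT B ∧ (B.mulVec x) 3 = 0 := by
  intro n
  induction n with
  | zero =>
    intro x hx
    have : x 3 = 0 := by omega
    exact ⟨1, MemOT_one, by simp [Matrix.one_mulVec, this]⟩
  | succ n ih =>
    intro x hx
    by_cases h3 : x 3 = 0
    · exact ⟨1, MemOT_one, by simp [Matrix.one_mulVec, h3]⟩
    · set t : ℤ := x 1 / x 3 with ht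
      have hm : (0:ℤ)^2 + (0:ℤ)^2 = 2*((0:ℤ)*t) - 2*0 := by ring
      set B1 := Em3 0 t 0 0 0 with hB1
      set y := B1.mulVec x with hy
      have hyv : y = ![x 0, x 1 - t * x 3, x 2 + t * x 0, x 3, x 4, x 5] := by
        rw [hy, hB1, Em3_act]
        norm_num
      set z := SwU.mulVec y with hz
      have hz3 : z 3 = x 1 - t * x 3 := by
        rw [hz, SwU_act, hyv]
        norm_num
        rfl
      have hz3' : z 3 = x 1 % x 3 := by
        rw [hz3, ht, Int.emod_def]
        ring
      have hbound : (z 3).natAbs ≤ n := by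
        have h1 : 0 ≤ x 1 % x 3 := Int.emod_nonneg _ h3
        have h2 : x 1 % x 3 < |x 3| := emod_lt_abs _ h3
        rw [hz3']
        rcases abs_cases (x 3) with ⟨he, _⟩ | ⟨he, _⟩ <;> omega
      obtain ⟨B2, hB2, hB2z⟩ := ih z hbound
      refine ⟨B2 * (SwU * B1), MemOT_mul hB2 (MemOT_mul MemOT_SwU (MemOT_Em3 0 t 0 0 0 hm)), ?_⟩
      rw [← Matrix.mulVec_mulVec, ← Matrix.mulVec_mulVec]
      exact hB2z

/-- Phase III: from coprime second and third coordinates, make the second `1`. -/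
lemma copr_to_one : ∀ n : ℕ, ∀ x : Fin 6 → ℤ, (x 1).natAbs ≤ n →
    IsCoprime (x 1) (x 2) → ∃ B, MemOT B ∧ (B.mulVec x) 1 = 1 := by
  intro n
  induction n with
  | zero =>
    intro x hx hcop
    have h0 : x 1 = 0 := by omega
    rw [h0] at hcop
    rcases Int.isUnit_iff.mp (isCoprime_zero_left.mp hcop) with h1 | h1
    · exact ⟨WU, MemOT_WU, by rw [WU_act]; simpa using h1⟩
    · refine ⟨NU * WU, MemOT_mul MemOT_NU MemOT_WU, ?_⟩
      rw [← Matrix.mulVec_mulVec, WU_act, NU_act]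
      simp [h1]
  | succ n ih =>
    intro x hx hcop
    by_cases h0 : x 1 = 0
    · rw [h0] at hcop
      rcases Int.isUnit_iff.mp (isCoprime_zero_left.mp hcop) with h1 | h1
      · exact ⟨WU, MemOT_WU, by rw [WU_act]; simpa using h1⟩
      · refine ⟨NU * WU, MemOT_mul MemOT_NU MemOT_WU, ?_⟩
        rw [← Matrix.mulVec_mulVec, WU_act, NU_act]
        simp [h1]
    by_cases h1 : x 1 = 1
    · exact ⟨1, MemOT_one, by simp [Matrix.one_mulVec, h1]⟩
    by_cases h2 : x 1 = -1
    · exact ⟨NU, MemOT_NU, by rw [NU_act]; simp [h2]⟩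
    · set s : ℤ := x 2 / x 1 with hs
      have hm : (0:ℤ)^2 + (0:ℤ)^2 = 2*(s*0) - 2*0 := by ring
      set B1 := Em1 s 0 0 0 0 with hB1
      set y := B1.mulVec x with hy
      have hyv : y = ![x 0 + s * x 3, x 1, x 2 - s * x 1, x 3, x 4, x 5] := by
        rw [hy, hB1, Em1_act]
        norm_num
      set z := WU.mulVec y with hz
      have hz1 : z 1 = x 2 - s * x 1 := by rw [hz, WU_act, hyv]; norm_num; rfl
      have hz2 : z 2 = x 1 := by rw [hz, WU_act, hyv]; norm_num; rfl
      have hz1' : z 1 = x 2 % x 1 := by rw [hz1, hs, Int.emod_def]; ring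
      have hbound : (z 1).natAbs ≤ n := by
        have ha1 : 0 ≤ x 2 % x 1 := Int.emod_nonneg _ h0
        have ha2 : x 2 % x 1 < |x 1| := emod_lt_abs _ h0
        rw [hz1']
        rcases abs_cases (x 1) with ⟨he, _⟩ | ⟨he, _⟩ <;> omega
      have hcop' : IsCoprime (z 1) (z 2) := by
        rw [hz1, hz2]
        have : IsCoprime (x 1) (x 2 + x 1 * (-s)) := hcop.add_mul_left_right (-s)
        have h' : x 2 + x 1 * (-s) = x 2 - s * x 1 := by ring
        rw [h'] at this
        exact this.symm
      obtain ⟨B2, hB2, hB2z⟩ := ih z hbound hcop'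
      refine ⟨B2 * (WU * B1), MemOT_mul hB2 (MemOT_mul MemOT_WU (MemOT_Em1 s 0 0 0 0 hm)), ?_⟩
      rw [← Matrix.mulVec_mulVec, ← Matrix.mulVec_mulVec]
      exact hB2z

/-- Phase IV: finish from a state with second coordinate `1`. -/
lemma finish_one (k : ℤ) (z : Fin 6 → ℤ) (hnorm : bilT z z = -(2*k+1)) (h1 : z 1 = 1) :
    ∃ B, MemOT B ∧ B.mulVec z = ![1, -k, 0, 0, 1, 0] := by
  have hodd : Odd ((z 4)^2 + (z 5)^2) := by
    have := bilT_expand z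
    rw [hnorm, h1] at this
    exact ⟨z 0 + (z 2)*(z 3) + k, by linarith⟩
  have hoddsum : Odd (z 4 + z 5) := odd_add_of_odd_sq hodd
  have heven : Even ((z 4 - 1) + z 5) := by
    obtain ⟨r, hr⟩ := hoddsum
    exact ⟨r, by omega⟩
  obtain ⟨m, hm⟩ := exists_m (z 2) (z 3) (z 4 - 1) (z 5) heven
  set B1 := Em1 (z 2) (z 3) (z 4 - 1) (z 5) m with hB1
  set y := B1.mulVec z with hy
  have hyv : y = ![z 0 - m + z 3 * z 2 + z 2 * z 3 - (z 4 - 1) * z 4 - z 5 * z 5,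
      1, 0, 0, 1, 0] := by
    rw [hy, hB1, Em1_act, h1]
    norm_num
  have hynorm : bilT y y = -(2*k+1) := by
    rw [hy, bilT_mulVec (MemOT_Em1 _ _ _ _ _ hm), hnorm]
  have hy0 : y 0 = -k := by
    have := bilT_expand y
    rw [hynorm] at this
    have h0 : y 1 = 1 := by rw [hyv]; norm_num
    have h2 : y 2 = 0 := by rw [hyv]; norm_num; rfl
    have h3 : y 3 = 0 := by rw [hyv]; norm_num; rfl
    have h4 : y 4 = 1 := by rw [hyv]; norm_num; rfl
    have h5 : y 5 = 0 := by rw [hyv]; norm_num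
    rw [h0, h2, h3, h4, h5] at this
    linarith
  refine ⟨P12 * B1, MemOT_mul MemOT_P12 (MemOT_Em1 _ _ _ _ _ hm), ?_⟩
  rw [← Matrix.mulVec_mulVec, ← hy, P12_act]
  have h0 : y 1 = 1 := by rw [hyv]; norm_num
  have h2 : y 2 = 0 := by rw [hyv]; norm_num; rfl
  have h3 : y 3 = 0 := by rw [hyv]; norm_num; rfl
  have h4 : y 4 = 1 := by rw [hyv]; norm_num; rfl
  have h5 : y 5 = 0 := by rw [hyv]; norm_num
  rw [h0, h2, h3, h4, h5, hy0]

/-- Phase II + III: from `z 3 = 0`, `z 1 ≠ 0` reach second coordinate `1`. -/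
lemma stage2' (k : ℤ) (z : Fin 6 → ℤ) (hprim : IsPrimitive z)
    (hnorm : bilT z z = -(2*k+1)) (h3 : z 3 = 0) (hb : z 1 ≠ 0) :
    ∃ B, MemOT B ∧ (B.mulVec z) 1 = 1 := by
  classical
  set A := z 0 with hA
  set Bv := z 1 with hBv
  set C := z 2 with hC
  set E := z 4 with hE
  set F := z 5 with hF
  have hodd : Odd (E^2 + F^2) := by
    have := bilT_expand z
    rw [hnorm, h3] at this
    exact ⟨A*Bv + k, by rw [hA, hBv]; linarith⟩
  have hoddEF : Odd (E + F) := odd_add_of_odd_sq hodd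
  set M : ℕ := Int.gcd (Int.gcd Bv A) (Int.gcd (E+F) (E-F)) with hM
  have hMdvd1 : (M:ℤ) ∣ Bv := dvd_trans (Int.gcd_dvd_left _ _) (Int.gcd_dvd_left _ _)
  have hMdvd2 : (M:ℤ) ∣ A := dvd_trans (Int.gcd_dvd_left _ _) (Int.gcd_dvd_right _ _)
  have hMdvd3 : (M:ℤ) ∣ E + F := dvd_trans (Int.gcd_dvd_right _ _) (Int.gcd_dvd_left _ _)
  have hMdvd4 : (M:ℤ) ∣ E - F := dvd_trans (Int.gcd_dvd_right _ _) (Int.gcd_dvd_right _ _)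
  have hModd : Odd (M:ℤ) := by
    rcases Int.even_or_odd (M:ℤ) with hev | hod
    · exfalso
      obtain ⟨m', hm'⟩ := hev
      obtain ⟨t', ht'⟩ := hMdvd3
      have : Even (E + F) := ⟨m' * t', by rw [ht', hm']; ring⟩
      exact (Int.not_odd_iff_even.mpr this) hoddEF
    · exact hod
  have hMdvdE : (M:ℤ) ∣ E := by
    apply odd_dvd_of_dvd_two_mul hModd
    have := hMdvd3.add hMdvd4
    have h2 : (E+F) + (E-F) = 2*E := by ring
    rwa [h2] at this
  have hMdvdF : (M:ℤ) ∣ F := by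
    apply odd_dvd_of_dvd_two_mul hModd
    have := hMdvd3.sub hMdvd4
    have h2 : (E+F) - (E-F) = 2*F := by ring
    rwa [h2] at this
  -- IsCoprime M C
  have hcopMC : IsCoprime (M:ℤ) C := by
    rw [Int.isCoprime_iff_gcd_eq_one]
    set d : ℕ := Int.gcd (M:ℤ) C with hd
    have hddvdM : (d:ℤ) ∣ (M:ℤ) := (Int.gcd_dvd_left _ _)
    have hddvdC : (d:ℤ) ∣ C := (Int.gcd_dvd_right _ _)
    have : IsUnit (d:ℤ) := by
      apply hprim.isUnit_of_dvd
      intro i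
      fin_cases i
      · exact dvd_trans hddvdM hMdvd2
      · exact dvd_trans hddvdM hMdvd1
      · exact hddvdC
      · exact ⟨0, by simp [h3]⟩
      · exact dvd_trans hddvdM hMdvdE
      · exact dvd_trans hddvdM hMdvdF
    rcases Int.isUnit_iff.mp this with h | h
    · exact_mod_cast h
    · exfalso; omega
  obtain ⟨k', hk'⟩ := coprime_shift Bv (M:ℤ) C hb hcopMC
  obtain ⟨s, t, p, q, hbez⟩ := bez4 Bv A (E+F) (E-F)
  set su := s * k' with hsu
  set tu := t * k' with htu
  set uu := -((p+q) * k') with huu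
  set wu := -((p-q) * k') with hwu
  have hevenuw : Even (uu + wu) := ⟨-(p*k'), by rw [huu, hwu]; ring⟩
  obtain ⟨m, hm⟩ := exists_m su tu uu wu hevenuw
  set B1 := Em3 su tu uu wu m with hB1
  set y := B1.mulVec z with hy
  have hy1 : y 1 = Bv := by
    rw [hy, hB1, Em3_act, h3]
    norm_num
    rfl
  have hy2 : y 2 = C + (M:ℤ) * k' := by
    rw [hy, hB1, Em3_act, h3]
    push_cast
    norm_num
    rw [← hbez, hC, hA, hBv, hE, hF, hsu, htu, huu, hwu]
    ring
  have hcop' : IsCoprime (y 1) (y 2) := by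
    rw [hy1, hy2]; exact hk'
  obtain ⟨B2, hB2, hB2y⟩ := copr_to_one (y 1).natAbs y le_rfl hcop'
  refine ⟨B2 * B1, MemOT_mul hB2 (MemOT_Em3 _ _ _ _ _ hm), ?_⟩
  rw [← Matrix.mulVec_mulVec]
  exact hB2y

/-- Phase II from any state with `y 3 = 0`. -/
lemma stage2 (k : ℤ) (y : Fin 6 → ℤ) (hprim : IsPrimitive y)
    (hnorm : bilT y y = -(2*k+1)) (h3 : y 3 = 0) :
    ∃ B, MemOT B ∧ (B.mulVec y) 1 = 1 := by
  by_cases hb : y 1 ≠ 0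
  · exact stage2' k y hprim hnorm h3 hb
  push_neg at hb
  by_cases ha : y 0 ≠ 0
  · -- swap first two coordinates
    set z := P12.mulVec y with hz
    have hzprim : IsPrimitive z := hprim.mulVecOT MemOT_P12
    have hznorm : bilT z z = -(2*k+1) := by rw [hz, bilT_mulVec MemOT_P12, hnorm]
    have hz3 : z 3 = 0 := by rw [hz, P12_act]; simpa using h3
    have hzb : z 1 ≠ 0 := by rw [hz, P12_act]; simpa using ha
    obtain ⟨B2, hB2, hB2z⟩ := stage2' k z hzprim hznorm hz3 hzb
    refine ⟨B2 * P12, MemOT_mul hB2 MemOT_P12, ?_⟩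
    rw [← Matrix.mulVec_mulVec]
    exact hB2z
  · push_neg at ha
    -- y = (0, 0, C, 0, E, F)
    set C := y 2 with hC
    set E := y 4 with hE
    set F := y 5 with hF
    have hodd : Odd (E^2 + F^2) := by
      have := bilT_expand y
      rw [hnorm, h3, ha, hb] at this
      exact ⟨k, by linarith⟩
    have hoddEF : Odd (E + F) := odd_add_of_odd_sq hodd
    set g : ℕ := Int.gcd C (Int.gcd (E+F) (E-F)) with hg
    have hg1 : (g:ℤ) ∣ C := (Int.gcd_dvd_left _ _)
    have hg3 : (g:ℤ) ∣ E + F := dvd_trans (Int.gcd_dvd_right _ _) (Int.gcd_dvd_left _ _)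
    have hg4 : (g:ℤ) ∣ E - F := dvd_trans (Int.gcd_dvd_right _ _) (Int.gcd_dvd_right _ _)
    have hgodd : Odd (g:ℤ) := by
      rcases Int.even_or_odd (g:ℤ) with hev | hod
      · exfalso
        obtain ⟨m', hm'⟩ := hev
        obtain ⟨t', ht'⟩ := hg3
        have : Even (E + F) := ⟨m' * t', by rw [ht', hm']; ring⟩
        exact (Int.not_odd_iff_even.mpr this) hoddEF
      · exact hod
    have hgE : (g:ℤ) ∣ E := by
      apply odd_dvd_of_dvd_two_mul hgodd
      have := hg3.add hg4
      have h2 : (E+F) + (E-F) = 2*E := by ring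
      rwa [h2] at this
    have hgF : (g:ℤ) ∣ F := by
      apply odd_dvd_of_dvd_two_mul hgodd
      have := hg3.sub hg4
      have h2 : (E+F) - (E-F) = 2*F := by ring
      rwa [h2] at this
    have hgu : IsUnit (g:ℤ) := by
      apply hprim.isUnit_of_dvd
      intro i
      fin_cases i
      · exact ⟨0, by simp [ha]⟩
      · exact ⟨0, by simp [hb]⟩
      · exact hg1
      · exact ⟨0, by simp [h3]⟩
      · exact hgE
      · exact hgF
    have hg1' : (g:ℤ) = 1 := by
      rcases Int.isUnit_iff.mp hgu with h | h
      · exact h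
      · exfalso; omega
    obtain ⟨α, β', hbez1⟩ := bez2 C (Int.gcd (E+F) (E-F) : ℤ)
    obtain ⟨β, γ, hbez2'⟩ := bez2 (E+F) (E-F)
    -- α C + β' (β (E+F) + γ (E-F)) = 1
    have hcombo : α * C + (β'*β) * (E+F) + (β'*γ) * (E-F) = 1 := by
      have : α * C + β' * ((Int.gcd (E+F) (E-F) : ℤ)) = (g:ℤ) := by
        rw [hg]
        push_cast [Int.gcd_natCast_natCast]
        exact_mod_cast hbez1
      rw [← hbez2'] at this
      rw [hg1'] at this
      linarith [this]
    set uu := -((β'*β) + (β'*γ)) with huu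
    set wu := -((β'*β) - (β'*γ)) with hwu
    have hevenuw : Even (uu + wu) := ⟨-(β'*β), by rw [huu, hwu]; ring⟩
    obtain ⟨m, hm⟩ := exists_m 0 α uu wu hevenuw
    set B1 := Em1 0 α uu wu m with hB1
    set y' := B1.mulVec y with hy'
    have hy'0 : y' 0 = 1 := by
      rw [hy', hB1, Em1_act, ha, hb, h3]
      norm_num
      rw [← hcombo, hC, hE, hF, huu, hwu]
      ring
    refine ⟨P12 * B1, MemOT_mul MemOT_P12 (MemOT_Em1 _ _ _ _ _ hm), ?_⟩
    rw [← Matrix.mulVec_mulVec, ← hy', P12_act]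
    simpa using hy'0

theorem stmt0 (k : ℤ) (hk : 0 < k) (x : Fin 6 → ℤ)
    (hprim : IsPrimitive x) (hx : bilT x x = -(2 * k + 1)) :
    ∃ B : Matrix (Fin 6) (Fin 6) ℤ, MemOT B ∧ B.mulVec x = ![1, -k, 0, 0, 1, 0] := by
  obtain ⟨B1, hB1, hy3⟩ := kill3 (x 3).natAbs x le_rfl
  set y := B1.mulVec x with hy
  have hyprim : IsPrimitive y := hprim.mulVecOT hB1
  have hynorm : bilT y y = -(2*k+1) := by rw [hy, bilT_mulVec hB1, hx]
  obtain ⟨B2, hB2, hz1⟩ := stage2 k y hyprim hynorm hy3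
  set z := B2.mulVec y with hz
  have hznorm : bilT z z = -(2*k+1) := by rw [hz, bilT_mulVec hB2, hynorm]
  obtain ⟨B3, hB3, hfin⟩ := finish_one k z hznorm hz1
  refine ⟨B3 * (B2 * B1), MemOT_mul hB3 (MemOT_mul hB2 hB1), ?_⟩
  rw [← Matrix.mulVec_mulVec, ← Matrix.mulVec_mulVec]
  exact hfin
end

section
/- Let x ∈ ℤ⁶ be a primitive characteristic vector with ⟨x,x⟩ = −2k for some integer k > 0. Then k ≡ 1 (mod 4), and there exists B ∈ O(T) with B·x = (2, (1−k)/2, 0, 0, 1, 1). -/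
open Matrix

/-- A vector `x` is characteristic if `⟨x, y⟩ ≡ ⟨y, y⟩ (mod 2)` for all `y`. -/
def IsCharacteristic (x : Fin 6 → ℤ) : Prop :=
  ∀ y : Fin 6 → ℤ, bilT x y ≡ bilT y y [ZMOD 2]



section vec6
variable {α : Type*} (x : α)
@[simp] lemma consval1 (u : Fin 5 → α) : vecCons x u 1 = u 0 := rfl
@[simp] lemma consval2 (u : Fin 5 → α) : vecCons x u 2 = u 1 := rfl
@[simp] lemma consval3 (u : Fin 5 → α) : vecCons x u 3 = u 2 := rfl
@[simp] lemma consval4 (u : Fin 5 → α) : vecCons x u 4 = u 3 := rfl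
@[simp] lemma consval5 (u : Fin 5 → α) : vecCons x u 5 = u 4 := rfl
@[simp] lemma consval1' (u : Fin 4 → α) : vecCons x u 1 = u 0 := rfl
@[simp] lemma consval2' (u : Fin 4 → α) : vecCons x u 2 = u 1 := rfl
@[simp] lemma consval3' (u : Fin 4 → α) : vecCons x u 3 = u 2 := rfl
@[simp] lemma consval4' (u : Fin 4 → α) : vecCons x u 4 = u 3 := rfl
@[simp] lemma consval1'' (u : Fin 3 → α) : vecCons x u 1 = u 0 := rfl
@[simp] lemma consval2'' (u : Fin 3 → α) : vecCons x u 2 = u 1 := rfl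
@[simp] lemma consval3'' (u : Fin 3 → α) : vecCons x u 3 = u 2 := rfl
@[simp] lemma consval1'_s2'' (u : Fin 2 → α) : vecCons x u 1 = u 0 := rfl
@[simp] lemma consval2'_s2'' (u : Fin 2 → α) : vecCons x u 2 = u 1 := rfl
@[simp] lemma consval1'_s2''' (u : Fin 1 → α) : vecCons x u 1 = u 0 := rfl
end vec6

lemma bilT_eq (x y : Fin 6 → ℤ) :
    bilT x y = x 0 * y 1 + x 1 * y 0 + x 2 * y 3 + x 3 * y 2 - x 4 * y 4 - x 5 * y 5 := by
  simp [bilT, G6, mulVec, dotProduct, Fin.sum_univ_six, Matrix.vecHead, Matrix.vecTail, Function.comp]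
  ring

def Reach (x y : Fin 6 → ℤ) : Prop := ∃ B, MemOT B ∧ B.mulVec x = y

lemma reach_refl (x : Fin 6 → ℤ) : Reach x x :=
  ⟨1, ⟨by simp, by simp⟩, by simp⟩

lemma memOT_mul {B C : Matrix (Fin 6) (Fin 6) ℤ} (hB : MemOT B) (hC : MemOT C) :
    MemOT (B * C) := by
  refine ⟨by rw [Matrix.det_mul]; exact hB.1.mul hC.1, ?_⟩
  have : (B * C)ᵀ * G6 * (B * C) = Cᵀ * (Bᵀ * G6 * B) * C := by
    rw [Matrix.transpose_mul]
    simp only [Matrix.mul_assoc]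
  rw [this, hB.2, hC.2]

lemma reach_trans {x y z : Fin 6 → ℤ} (h1 : Reach x y) (h2 : Reach y z) : Reach x z := by
  obtain ⟨B, hB, hBx⟩ := h1
  obtain ⟨C, hC, hCy⟩ := h2
  exact ⟨C * B, memOT_mul hC hB, by rw [← Matrix.mulVec_mulVec, hBx, hCy]⟩

lemma reach_congr {x y z : Fin 6 → ℤ} (h : Reach x y) (hyz : y = z) : Reach x z := hyz ▸ h

lemma memOT_inv {B : Matrix (Fin 6) (Fin 6) ℤ} (hB : MemOT B) :
    ∃ C, MemOT C ∧ C * B = 1 ∧ B * C = 1 := by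
  refine ⟨B⁻¹, ⟨?_, ?_⟩, Matrix.nonsing_inv_mul B hB.1, Matrix.mul_nonsing_inv B hB.1⟩
  · exact IsUnit.of_mul_eq_one _ (by
      rw [← Matrix.det_mul, Matrix.nonsing_inv_mul B hB.1, Matrix.det_one])
  · have h1 : B * B⁻¹ = 1 := Matrix.mul_nonsing_inv B hB.1
    have : (B⁻¹)ᵀ * G6 * B⁻¹ = (B⁻¹)ᵀ * (Bᵀ * G6 * B) * B⁻¹ := by rw [hB.2]
    rw [this]
    have : (B⁻¹)ᵀ * (Bᵀ * G6 * B) * B⁻¹ = (B * B⁻¹)ᵀ * G6 * (B * B⁻¹) := by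
      rw [Matrix.transpose_mul]
      simp only [Matrix.mul_assoc]
    rw [this, h1]
    simp

lemma reach_symm {x y : Fin 6 → ℤ} (h : Reach x y) : Reach y x := by
  obtain ⟨B, hB, hBx⟩ := h
  obtain ⟨C, hC, hCB, _⟩ := memOT_inv hB
  exact ⟨C, hC, by rw [← hBx, Matrix.mulVec_mulVec, hCB, Matrix.one_mulVec]⟩

lemma bil_mulVec {B : Matrix (Fin 6) (Fin 6) ℤ} (hg : Bᵀ * G6 * B = G6) (u v : Fin 6 → ℤ) :
    bilT (B.mulVec u) (B.mulVec v) = bilT u v := by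
  calc bilT (B *ᵥ u) (B *ᵥ v) = (B *ᵥ u) ⬝ᵥ (G6 * B) *ᵥ v := by
        unfold bilT; rw [Matrix.mulVec_mulVec]
    _ = (B *ᵥ u) ᵥ* (G6 * B) ⬝ᵥ v := Matrix.dotProduct_mulVec _ _ _
    _ = (u ᵥ* Bᵀ) ᵥ* (G6 * B) ⬝ᵥ v := by rw [Matrix.vecMul_transpose]
    _ = u ᵥ* (Bᵀ * (G6 * B)) ⬝ᵥ v := by rw [Matrix.vecMul_vecMul]
    _ = u ᵥ* G6 ⬝ᵥ v := by rw [← Matrix.mul_assoc, hg]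
    _ = u ⬝ᵥ G6 *ᵥ v := (Matrix.dotProduct_mulVec _ _ _).symm

lemma reach_bil {x y : Fin 6 → ℤ} (h : Reach x y) : bilT y y = bilT x x := by
  obtain ⟨B, hB, hBx⟩ := h
  rw [← hBx, bil_mulVec hB.2]

lemma reach_char {x y : Fin 6 → ℤ} (h : Reach x y) (hc : IsCharacteristic x) :
    IsCharacteristic y := by
  obtain ⟨B, hB, hBx⟩ := h
  obtain ⟨C, hC, hCB, hBC⟩ := memOT_inv hB
  intro z
  have hz : B.mulVec (C.mulVec z) = z := by
    rw [Matrix.mulVec_mulVec, hBC, Matrix.one_mulVec]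
  calc bilT y z = bilT (B.mulVec x) (B.mulVec (C.mulVec z)) := by rw [hBx, hz]
    _ = bilT x (C.mulVec z) := bil_mulVec hB.2 _ _
    _ ≡ bilT (C.mulVec z) (C.mulVec z) [ZMOD 2] := hc _
    _ = bilT (B.mulVec (C.mulVec z)) (B.mulVec (C.mulVec z)) := (bil_mulVec hB.2 _ _).symm
    _ = bilT z z := by rw [hz]

lemma reach_prim {x y : Fin 6 → ℤ} (h : Reach x y) (hp : IsPrimitive x) : IsPrimitive y := by
  obtain ⟨B, hB, hBx⟩ := h
  obtain ⟨C, hC, hCB, hBC⟩ := memOT_inv hB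
  have hx : C.mulVec y = x := by rw [← hBx, Matrix.mulVec_mulVec, hCB, Matrix.one_mulVec]
  set d := Finset.univ.gcd y with hd
  have hdiv : ∀ i, d ∣ x i := by
    intro i
    rw [← hx]
    unfold Matrix.mulVec dotProduct
    exact Finset.dvd_sum fun j _ => Dvd.dvd.mul_left (Finset.gcd_dvd (Finset.mem_univ j)) _
  have h1 : d ∣ 1 := by
    rw [show (1:ℤ) = Finset.univ.gcd x from hp.symm]
    exact Finset.dvd_gcd fun i _ => hdiv i
  have hu := isUnit_of_dvd_one h1
  rcases Int.isUnit_iff.mp hu with h' | h'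
  · exact h'
  · exfalso
    have hn : normalize d = d := Finset.normalize_gcd
    rw [h'] at hn
    have : normalize (-1 : ℤ) = 1 := by decide
    omega
-- matrices and reach lemmas
def Mswap12 : Matrix (Fin 6) (Fin 6) ℤ :=
  !![0,1,0,0,0,0; 1,0,0,0,0,0; 0,0,1,0,0,0; 0,0,0,1,0,0; 0,0,0,0,1,0; 0,0,0,0,0,1]
def Mswap34 : Matrix (Fin 6) (Fin 6) ℤ :=
  !![1,0,0,0,0,0; 0,1,0,0,0,0; 0,0,0,1,0,0; 0,0,1,0,0,0; 0,0,0,0,1,0; 0,0,0,0,0,1]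
def MswapPl : Matrix (Fin 6) (Fin 6) ℤ :=
  !![0,0,1,0,0,0; 0,0,0,1,0,0; 1,0,0,0,0,0; 0,1,0,0,0,0; 0,0,0,0,1,0; 0,0,0,0,0,1]
def Mneg12 : Matrix (Fin 6) (Fin 6) ℤ :=
  !![-1,0,0,0,0,0; 0,-1,0,0,0,0; 0,0,1,0,0,0; 0,0,0,1,0,0; 0,0,0,0,1,0; 0,0,0,0,0,1]
def Mneg6 : Matrix (Fin 6) (Fin 6) ℤ :=
  !![1,0,0,0,0,0; 0,1,0,0,0,0; 0,0,1,0,0,0; 0,0,0,1,0,0; 0,0,0,0,1,0; 0,0,0,0,0,-1]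
def MB1 (a3 a4 s t m : ℤ) : Matrix (Fin 6) (Fin 6) ℤ :=
  !![1, m - a3*a4, -a4, -a3, s, t;
     0, 1, 0, 0, 0, 0;
     0, a3, 1, 0, 0, 0;
     0, a4, 0, 1, 0, 0;
     0, s, 0, 0, 1, 0;
     0, t, 0, 0, 0, 1]

lemma memOT_of_inv {B : Matrix (Fin 6) (Fin 6) ℤ} (C : Matrix (Fin 6) (Fin 6) ℤ) (h : B * C = 1)
    (hg : Bᵀ * G6 * B = G6) : MemOT B :=
  ⟨IsUnit.of_mul_eq_one _ (by rw [← Matrix.det_mul, h, Matrix.det_one]), hg⟩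

lemma memOT_swap12 : MemOT Mswap12 := memOT_of_inv Mswap12 (by decide) (by decide)
lemma memOT_swap34 : MemOT Mswap34 := memOT_of_inv Mswap34 (by decide) (by decide)
lemma memOT_swapPl : MemOT MswapPl := memOT_of_inv MswapPl (by decide) (by decide)
lemma memOT_neg12 : MemOT Mneg12 := memOT_of_inv Mneg12 (by decide) (by decide)
lemma memOT_neg6 : MemOT Mneg6 := memOT_of_inv Mneg6 (by decide) (by decide)

set_option maxHeartbeats 1000000 in
lemma memOT_B1 (a3 a4 s t m : ℤ) (h : s^2 + t^2 = 2*m) : MemOT (MB1 a3 a4 s t m) := by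
  apply memOT_of_inv (MB1 (-a3) (-a4) (-s) (-t) m)
  · ext i j
    fin_cases i <;> fin_cases j <;>
      simp [MB1, Matrix.mul_apply, Fin.sum_univ_six, Matrix.one_apply, Matrix.vecHead, Matrix.vecTail, Function.comp] <;>
      first
        | (ring1)
        | (linear_combination h)
        | (linear_combination -h)
  · ext i j
    fin_cases i <;> fin_cases j <;>
      simp [MB1, G6, Matrix.mul_apply, Matrix.transpose_apply, Fin.sum_univ_six, Matrix.vecHead, Matrix.vecTail, Function.comp] <;>
      first
        | (ring1)
        | (linear_combination h)
        | (linear_combination -h)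

set_option maxHeartbeats 1000000 in
lemma reach_B1 (a3 a4 s t m : ℤ) (h : s^2 + t^2 = 2*m) (x : Fin 6 → ℤ) :
    Reach x ![x 0 + (m - a3*a4)*x 1 - a4*x 2 - a3*x 3 + s*x 4 + t*x 5,
              x 1, x 2 + a3*x 1, x 3 + a4*x 1, x 4 + s*x 1, x 5 + t*x 1] := by
  refine ⟨MB1 a3 a4 s t m, memOT_B1 a3 a4 s t m h, ?_⟩
  funext i
  fin_cases i <;>
    simp [MB1, Matrix.mulVec, dotProduct, Fin.sum_univ_six, Matrix.vecHead, Matrix.vecTail, Function.comp] <;> ring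

lemma reach_swap12 (x : Fin 6 → ℤ) : Reach x ![x 1, x 0, x 2, x 3, x 4, x 5] := by
  refine ⟨Mswap12, memOT_swap12, ?_⟩
  funext i
  fin_cases i <;> simp [Mswap12, Matrix.mulVec, dotProduct, Fin.sum_univ_six, Matrix.vecHead, Matrix.vecTail, Function.comp]

lemma reach_swap34 (x : Fin 6 → ℤ) : Reach x ![x 0, x 1, x 3, x 2, x 4, x 5] := by
  refine ⟨Mswap34, memOT_swap34, ?_⟩
  funext i
  fin_cases i <;> simp [Mswap34, Matrix.mulVec, dotProduct, Fin.sum_univ_six, Matrix.vecHead, Matrix.vecTail, Function.comp]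

lemma reach_swapPl (x : Fin 6 → ℤ) : Reach x ![x 2, x 3, x 0, x 1, x 4, x 5] := by
  refine ⟨MswapPl, memOT_swapPl, ?_⟩
  funext i
  fin_cases i <;> simp [MswapPl, Matrix.mulVec, dotProduct, Fin.sum_univ_six, Matrix.vecHead, Matrix.vecTail, Function.comp]

lemma reach_neg12 (x : Fin 6 → ℤ) : Reach x ![-x 0, -x 1, x 2, x 3, x 4, x 5] := by
  refine ⟨Mneg12, memOT_neg12, ?_⟩
  funext i
  fin_cases i <;> simp [Mneg12, Matrix.mulVec, dotProduct, Fin.sum_univ_six, Matrix.vecHead, Matrix.vecTail, Function.comp]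

lemma reach_neg6 (x : Fin 6 → ℤ) : Reach x ![x 0, x 1, x 2, x 3, x 4, -x 5] := by
  refine ⟨Mneg6, memOT_neg6, ?_⟩
  funext i
  fin_cases i <;> simp [Mneg6, Matrix.mulVec, dotProduct, Fin.sum_univ_six, Matrix.vecHead, Matrix.vecTail, Function.comp]

lemma reach_move1 (c : ℤ) (x : Fin 6 → ℤ) :
    Reach x ![x 0 - c*x 3, x 1, x 2 + c*x 1, x 3, x 4, x 5] := by
  apply reach_congr (reach_B1 c 0 0 0 0 (by ring) x)
  funext i; fin_cases i <;> simp <;> ring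

lemma reach_move2 (c : ℤ) (x : Fin 6 → ℤ) :
    Reach x ![x 0 - c*x 2, x 1, x 2, x 3 + c*x 1, x 4, x 5] := by
  apply reach_congr (reach_B1 0 c 0 0 0 (by ring) x)
  funext i; fin_cases i <;> simp <;> ring

lemma reach_move3 (c : ℤ) (x : Fin 6 → ℤ) :
    Reach x ![x 0, x 1 - c*x 3, x 2 + c*x 0, x 3, x 4, x 5] := by
  apply reach_congr
    (reach_trans (reach_swap12 x) (reach_trans (reach_move1 c _) (reach_swap12 _)))
  funext i; fin_cases i <;> simp <;> ring

lemma reach_move4 (c : ℤ) (x : Fin 6 → ℤ) :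
    Reach x ![x 0, x 1 - c*x 2, x 2, x 3 + c*x 0, x 4, x 5] := by
  apply reach_congr
    (reach_trans (reach_swap12 x) (reach_trans (reach_move2 c _) (reach_swap12 _)))
  funext i; fin_cases i <;> simp <;> ring

lemma reach_M1 (s t m : ℤ) (h : s^2 + t^2 = 2*m) (x : Fin 6 → ℤ) :
    Reach x ![x 0 + m*x 1 + s*x 4 + t*x 5, x 1, x 2, x 3, x 4 + s*x 1, x 5 + t*x 1] := by
  apply reach_congr (reach_B1 0 0 s t m h x)
  funext i; fin_cases i <;> simp <;> ring

lemma reach_M2 (s t m : ℤ) (h : s^2 + t^2 = 2*m) (x : Fin 6 → ℤ) :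
    Reach x ![x 0, x 1 + m*x 0 + s*x 4 + t*x 5, x 2, x 3, x 4 + s*x 0, x 5 + t*x 0] := by
  apply reach_congr
    (reach_trans (reach_swap12 x) (reach_trans (reach_M1 s t m h _) (reach_swap12 _)))
  funext i; fin_cases i <;> simp <;> ring

lemma char_coords {y : Fin 6 → ℤ} (h : IsCharacteristic y) :
    (2 ∣ y 0) ∧ (2 ∣ y 1) ∧ (2 ∣ y 2) ∧ (2 ∣ y 3) ∧ ¬(2 ∣ y 4) ∧ ¬(2 ∣ y 5) := by
  have h1 := (h ![0,1,0,0,0,0]).dvd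
  have h2 := (h ![1,0,0,0,0,0]).dvd
  have h3 := (h ![0,0,0,1,0,0]).dvd
  have h4 := (h ![0,0,1,0,0,0]).dvd
  have h5 := (h ![0,0,0,0,1,0]).dvd
  have h6 := (h ![0,0,0,0,0,1]).dvd
  simp only [bilT_eq] at h1 h2 h3 h4 h5 h6
  simp at h1 h2 h3 h4 h5 h6
  refine ⟨?_, ?_, ?_, ?_, ?_, ?_⟩ <;> omega

lemma k_mod4 {k : ℤ} {x : Fin 6 → ℤ} (hchar : IsCharacteristic x)
    (hx : bilT x x = -(2 * k)) : k % 4 = 1 := by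
  obtain ⟨⟨a, ha⟩, ⟨b, hb⟩, ⟨c, hc⟩, ⟨d, hd⟩, h4, h5⟩ := char_coords hchar
  obtain ⟨e, he⟩ : ∃ e, x 4 = 2*e + 1 := ⟨(x 4 - 1)/2, by omega⟩
  obtain ⟨f, hf⟩ : ∃ f, x 5 = 2*f + 1 := ⟨(x 5 - 1)/2, by omega⟩
  rw [bilT_eq, ha, hb, hc, hd, he, hf] at hx
  obtain ⟨g, hg⟩ := Int.even_mul_succ_self e
  obtain ⟨g', hg'⟩ := Int.even_mul_succ_self f
  have key : -(2*k) = 8*(a*b) + 8*(c*d) - (4*(e*(e+1)) + 1) - (4*(f*(f+1)) + 1) := by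
    rw [← hx]; ring
  omega

lemma natAbs_emod_lt' (a b : ℤ) (h : b ≠ 0) : (a % b).natAbs < b.natAbs := by
  have h1 : 0 ≤ a % b := Int.emod_nonneg a h
  rcases lt_or_gt_of_ne h with hb | hb
  · have h2 : a % b = a % (-b) := (Int.emod_neg a b).symm
    have h3 : a % (-b) < -b := Int.emod_lt_of_pos a (by omega)
    omega
  · have h3 : a % b < b := Int.emod_lt_of_pos a hb
    omega

lemma emod_decomp (a b : ℤ) : a = b * (a / b) + a % b := (Int.mul_ediv_add_emod a b).symm

lemma exists_snf : ∀ n : ℕ, ∀ x : Fin 6 → ℤ, (x 0).natAbs ≤ n → x 0 ≠ 0 →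
    ∃ y, Reach x y ∧ y 2 = 0 ∧ y 3 = 0 ∧ (y 0 ∣ y 1) ∧ y 4 = x 4 ∧ y 5 = x 5 ∧
      (y 0 ∣ x 0) ∧ (y 0 ∣ x 1) ∧ (y 0 ∣ x 2) ∧ (y 0 ∣ x 3) := by
  intro n
  induction n with
  | zero => intro x hle h0; exfalso; omega
  | succ n IH =>
    intro x hle h0
    by_cases hd2 : x 0 ∣ x 2
    · obtain ⟨c2, hc2⟩ := hd2
      by_cases hd3 : x 0 ∣ x 3
      · obtain ⟨c3, hc3⟩ := hd3
        -- clear coords 2 and 3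
        have r2' : Reach x ![x 0, x 1 + c2*x 3, 0, 0, x 4, x 5] := by
          apply reach_congr (reach_trans (reach_move3 (-c2) x) (reach_move4 (-c3) _))
          funext i; fin_cases i <;> simp <;>
            first | (ring1) | (rw [hc2]; ring1) | (rw [hc3]; ring1) | (right; rw [hc2]; ring1)
        set B : ℤ := x 1 + c2*x 3 with hB
        by_cases hb : x 0 ∣ B
        · have h1 : x 0 ∣ c2 * x 3 := ⟨c2 * c3, by rw [hc3]; ring⟩
          have hx1 : x 0 ∣ x 1 := by
            have h2 : x 1 = B - c2 * x 3 := by rw [hB]; ring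
            rw [h2]; exact dvd_sub hb h1
          refine ⟨![x 0, B, 0, 0, x 4, x 5], r2', by simp, by simp, by simpa using hb,
            by simp, by simp, by simp, by simpa using hx1, ?_, ?_⟩
          · simpa using ⟨c2, hc2⟩
          · simpa using ⟨c3, hc3⟩
        · -- Euclid step on (x0, B) through position 3
          set q0 : ℤ := B / x 0 with hq0
          set r : ℤ := B % x 0 with hr
          have hBr : B = x 0 * q0 + r := emod_decomp B (x 0)
          have hrne : r ≠ 0 := fun hc => hb (by
            have := Int.dvd_of_emod_eq_zero (hr ▸ hc)
            exact this)
          have hrlt : r.natAbs < (x 0).natAbs := natAbs_emod_lt' B (x 0) h0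
          have r6 : Reach x ![r, 0, x 0, B, x 4, x 5] := by
            apply reach_congr (reach_trans r2'
              (reach_trans (reach_move2 1 _)
                (reach_trans (reach_move4 (-q0) _)
                  (reach_trans (reach_swap34 _) (reach_swapPl _)))))
            funext i; fin_cases i <;> simp <;> first | (ring1) | (rw [hBr]; ring1)
          have hbound : r.natAbs ≤ n := by omega
          obtain ⟨y, hRy, hy2, hy3, hy01, hy4, hy5, hda, hdb, hdc, hdd⟩ :=
            IH ![r, 0, x 0, B, x 4, x 5] (by simpa using hbound) (by simpa using hrne)
          simp at hy4 hy5 hda hdb hdc hdd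
          refine ⟨y, reach_trans r6 hRy, hy2, hy3, hy01, hy4, hy5, hdc, ?_, ?_, ?_⟩
          · have h1 : y 0 ∣ c2 * x 3 := (hdc.trans ⟨c3, hc3⟩).mul_left c2
            have h2 : x 1 = B - c2 * x 3 := by rw [hB]; ring
            rw [h2]; exact dvd_sub hdd h1
          · exact hdc.trans ⟨c2, hc2⟩
          · exact hdc.trans ⟨c3, hc3⟩
      · -- x0 does not divide x3
        set q : ℤ := x 3 / x 0 with hq
        set r : ℤ := x 3 % x 0 with hrdef
        have hxr : x 3 = x 0 * q + r := emod_decomp (x 3) (x 0)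
        have hrne : r ≠ 0 := fun hc => hd3 (Int.dvd_of_emod_eq_zero (hrdef ▸ hc))
        have hrlt : r.natAbs < (x 0).natAbs := natAbs_emod_lt' (x 3) (x 0) h0
        have rr : Reach x ![r, x 2, x 0, x 1 + q*x 2, x 4, x 5] := by
          apply reach_congr (reach_trans (reach_move4 (-q) x)
            (reach_trans (reach_swap34 _) (reach_swapPl _)))
          funext i; fin_cases i <;> simp <;> first | (ring1) | (rw [hxr]; ring1)
        have hbound : r.natAbs ≤ n := by omega
        obtain ⟨y, hRy, hy2, hy3, hy01, hy4, hy5, hda, hdb, hdc, hdd⟩ :=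
          IH ![r, x 2, x 0, x 1 + q*x 2, x 4, x 5] (by simpa using hbound) (by simpa using hrne)
        simp at hy4 hy5 hda hdb hdc hdd
        refine ⟨y, reach_trans rr hRy, hy2, hy3, hy01, hy4, hy5, hdc, ?_, hdb, ?_⟩
        · have h1 : x 1 = (x 1 + q*x 2) - q * x 2 := by ring
          rw [h1]; exact dvd_sub hdd (hdb.mul_left q)
        · rw [hxr]; exact dvd_add (hdc.mul_right q) hda
    · -- x0 does not divide x2
      set q : ℤ := x 2 / x 0 with hq
      set r : ℤ := x 2 % x 0 with hrdef
      have hxr : x 2 = x 0 * q + r := emod_decomp (x 2) (x 0)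
      have hrne : r ≠ 0 := fun hc => hd2 (Int.dvd_of_emod_eq_zero (hrdef ▸ hc))
      have hrlt : r.natAbs < (x 0).natAbs := natAbs_emod_lt' (x 2) (x 0) h0
      have rr : Reach x ![r, x 3, x 0, x 1 + q*x 3, x 4, x 5] := by
        apply reach_congr (reach_trans (reach_move3 (-q) x) (reach_swapPl _))
        funext i; fin_cases i <;> simp <;> first | (ring1) | (rw [hxr]; ring1)
      have hbound : r.natAbs ≤ n := by omega
      obtain ⟨y, hRy, hy2, hy3, hy01, hy4, hy5, hda, hdb, hdc, hdd⟩ :=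
        IH ![r, x 3, x 0, x 1 + q*x 3, x 4, x 5] (by simpa using hbound) (by simpa using hrne)
      simp at hy4 hy5 hda hdb hdc hdd
      refine ⟨y, reach_trans rr hRy, hy2, hy3, hy01, hy4, hy5, hdc, ?_, ?_, hdb⟩
      · have h1 : x 1 = (x 1 + q*x 3) - q * x 3 := by ring
        rw [h1]; exact dvd_sub hdd (hdb.mul_left q)
      · rw [hxr]; exact dvd_add (hdc.mul_right q) hda

lemma exists_snf0 (x : Fin 6 → ℤ) :
    ∃ y, Reach x y ∧ y 2 = 0 ∧ y 3 = 0 ∧ (y 0 ∣ y 1) ∧ y 4 = x 4 ∧ y 5 = x 5 := by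
  by_cases h0 : x 0 ≠ 0
  · obtain ⟨y, h1, h2, h3, h4, h5, h6, _⟩ := exists_snf (x 0).natAbs x le_rfl h0
    exact ⟨y, h1, h2, h3, h4, h5, h6⟩
  push_neg at h0
  by_cases h1 : x 1 ≠ 0
  · have rr : Reach x ![x 1, x 0, x 2, x 3, x 4, x 5] := reach_swap12 x
    obtain ⟨y, g1, g2, g3, g4, g5, g6, _⟩ :=
      exists_snf (x 1).natAbs ![x 1, x 0, x 2, x 3, x 4, x 5] (by simp) (by simpa using h1)
    exact ⟨y, reach_trans rr g1, g2, g3, g4, by simpa using g5, by simpa using g6⟩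
  push_neg at h1
  by_cases h2 : x 2 ≠ 0
  · have rr : Reach x ![x 2, x 3, x 0, x 1, x 4, x 5] := reach_swapPl x
    obtain ⟨y, g1, g2, g3, g4, g5, g6, _⟩ :=
      exists_snf (x 2).natAbs ![x 2, x 3, x 0, x 1, x 4, x 5] (by simp) (by simpa using h2)
    exact ⟨y, reach_trans rr g1, g2, g3, g4, by simpa using g5, by simpa using g6⟩
  push_neg at h2
  by_cases h3 : x 3 ≠ 0
  · have rr : Reach x ![x 3, x 2, x 0, x 1, x 4, x 5] := by
      apply reach_congr (reach_trans (reach_swap34 x) (reach_swapPl _))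
      funext i; fin_cases i <;> simp
    obtain ⟨y, g1, g2, g3, g4, g5, g6, _⟩ :=
      exists_snf (x 3).natAbs ![x 3, x 2, x 0, x 1, x 4, x 5] (by simp) (by simpa using h3)
    exact ⟨y, reach_trans rr g1, g2, g3, g4, by simpa using g5, by simpa using g6⟩
  push_neg at h3
  exact ⟨x, reach_refl x, h2, h3, by rw [h0, h1], rfl, rfl⟩

lemma bezout3 (w q a' r : ℤ) (h : ∀ d : ℤ, d ∣ w → d ∣ q → d ∣ a' → IsUnit d) :
    ∃ s u z : ℤ, s*w + u*q + z*a' = r := by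
  have hg : (Int.gcd w q : ℤ) = w * Int.gcdA w q + q * Int.gcdB w q := Int.gcd_eq_gcd_ab w q
  have hgw : (Int.gcd w q : ℤ) ∣ w := Int.gcd_dvd_left _ _
  have hgq : (Int.gcd w q : ℤ) ∣ q := Int.gcd_dvd_right _ _
  have hone : Int.gcd (Int.gcd w q : ℤ) a' = 1 := by
    set D := Int.gcd (Int.gcd w q : ℤ) a' with hD
    have hDg : (D:ℤ) ∣ (Int.gcd w q : ℤ) := Int.gcd_dvd_left _ _
    have hDa : (D:ℤ) ∣ a' := Int.gcd_dvd_right _ _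
    have hu := h (D:ℤ) (hDg.trans hgw) (hDg.trans hgq) hDa
    rcases Int.isUnit_iff.mp hu with h' | h'
    · exact_mod_cast h'
    · exfalso; omega
  have hcop : IsCoprime (Int.gcd w q : ℤ) a' := Int.isCoprime_iff_gcd_eq_one.mpr hone
  obtain ⟨A, B, hAB⟩ := hcop
  refine ⟨r * A * Int.gcdA w q, r * A * Int.gcdB w q, r * B, ?_⟩
  have h1 : A * (w * Int.gcdA w q + q * Int.gcdB w q) + B * a' = 1 := by rw [← hg]; exact hAB
  linear_combination r * h1

lemma final_stage {x X : Fin 6 → ℤ} {k : ℤ} (hR : Reach x X) (hchar : IsCharacteristic x)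
    (hx : bilT x x = -(2*k)) (h1 : X 1 = 2) (h2 : X 2 = 0) (h3 : X 3 = 0) :
    Reach x ![2, (1-k)/2, 0, 0, 1, 1] := by
  obtain ⟨_, _, _, _, ho4, ho5⟩ := char_coords (reach_char hR hchar)
  obtain ⟨c, hc⟩ : ∃ c, X 4 = 2*c + 1 := ⟨(X 4 - 1)/2, by omega⟩
  obtain ⟨d, hd⟩ : ∃ d, X 5 = 2*d + 1 := ⟨(X 5 - 1)/2, by omega⟩
  by_cases hpar : ∃ e, c - d = 2*e
  · obtain ⟨e, he⟩ := hpar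
    have hm3 : (-c)^2 + (-d)^2 = 2*(c^2 - 2*c*e + 2*e^2) := by
      have : d = c - 2*e := by omega
      rw [this]; ring
    have r1 : Reach x ![X 0 + (c^2 - 2*c*e + 2*e^2)*2 + (-c)*X 4 + (-d)*X 5, 2, 0, 0, 1, 1] := by
      apply reach_congr (reach_trans hR (reach_M1 (-c) (-d) (c^2 - 2*c*e + 2*e^2) hm3 X))
      funext i; fin_cases i <;> simp [h1, h2, h3] <;> first | (ring1) | omega
    set A2 : ℤ := X 0 + (c^2 - 2*c*e + 2*e^2)*2 + (-c)*X 4 + (-d)*X 5 with hA2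
    have hn : bilT ![A2, 2, 0, 0, 1, 1] ![A2, 2, 0, 0, 1, 1] = -(2*k) := by
      rw [reach_bil r1, hx]
    rw [bilT_eq] at hn
    simp at hn
    have hAk : 2*A2 = 1 - k := by omega
    apply reach_congr (reach_trans r1 (reach_swap12 _))
    funext i; fin_cases i <;> simp <;> omega
  · have hpar' : ∃ e, c - d - 1 = 2*e := by
      rcases Int.even_or_odd (c - d) with ⟨e, he⟩ | ⟨e, he⟩
      · exact absurd ⟨e, by omega⟩ hpar
      · exact ⟨e, by omega⟩
    obtain ⟨e, he⟩ := hpar'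
    have hm3 : (-c)^2 + (-d-1)^2 = 2*(c^2 - 2*c*e + 2*e^2) := by
      have : d = c - 1 - 2*e := by omega
      rw [this]; ring
    have r1 : Reach x ![X 0 + (c^2 - 2*c*e + 2*e^2)*2 + (-c)*X 4 + (-d-1)*X 5, 2, 0, 0, 1, 1] := by
      apply reach_congr (reach_trans (reach_trans hR
        (reach_M1 (-c) (-d-1) (c^2 - 2*c*e + 2*e^2) hm3 X)) (reach_neg6 _))
      funext i; fin_cases i <;> simp [h1, h2, h3] <;> first | (ring1) | omega
    set A2 : ℤ := X 0 + (c^2 - 2*c*e + 2*e^2)*2 + (-c)*X 4 + (-d-1)*X 5 with hA2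
    have hn : bilT ![A2, 2, 0, 0, 1, 1] ![A2, 2, 0, 0, 1, 1] = -(2*k) := by
      rw [reach_bil r1, hx]
    rw [bilT_eq] at hn
    simp at hn
    have hAk : 2*A2 = 1 - k := by omega
    apply reach_congr (reach_trans r1 (reach_swap12 _))
    funext i; fin_cases i <;> simp <;> omega


theorem reach_main {k : ℤ} {x : Fin 6 → ℤ} (hprim : IsPrimitive x)
    (hchar : IsCharacteristic x) (hx : bilT x x = -(2*k)) :
    Reach x ![2, (1-k)/2, 0, 0, 1, 1] := by
  obtain ⟨y, hR, hy2, hy3, hy01, _, _⟩ := exists_snf0 x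
  have hcy : IsCharacteristic y := reach_char hR hchar
  have hpy : IsPrimitive y := reach_prim hR hprim
  obtain ⟨⟨a1, ha1⟩, ⟨b1, hb1⟩, _, _, ho4, ho5⟩ := char_coords hcy
  obtain ⟨w, hw⟩ : ∃ w, y 4 + y 5 = 2*w := ⟨(y 4 + y 5)/2, by omega⟩
  have hcop : ∀ d : ℤ, d ∣ w → d ∣ y 5 → d ∣ a1 → IsUnit d := by
    intro d h1 h2 h3
    have hd4 : d ∣ y 4 := by
      have h4 : y 4 = 2*w - y 5 := by omega
      rw [h4]; exact dvd_sub (h1.mul_left 2) h2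
    have hd0 : d ∣ y 0 := by rw [ha1]; exact h3.mul_left 2
    have hd1 : d ∣ y 1 := hd0.trans hy01
    apply isUnit_of_dvd_one
    rw [show (1:ℤ) = Finset.univ.gcd y from hpy.symm]
    apply Finset.dvd_gcd
    intro i _
    fin_cases i
    · exact hd0
    · exact hd1
    · show d ∣ y 2
      rw [hy2]; exact dvd_zero d
    · show d ∣ y 3
      rw [hy3]; exact dvd_zero d
    · exact hd4
    · exact h2
  obtain ⟨s, u, z, hbez⟩ := bezout3 w (y 5) a1 (1 - b1) hcop
  set t : ℤ := s + 2*u with ht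
  set m : ℤ := s^2 + 2*s*u + 2*u^2 with hm
  have hm' : s^2 + t^2 = 2*m := by rw [ht, hm]; ring
  have hco : y 1 + m*y 0 + s*y 4 + t*y 5 = 2 + (m - z)*y 0 := by
    rw [ht]; linear_combination s*hw + 2*hbez + z*ha1 + hb1
  have rv : Reach x ![y 0, 2 + (m - z)*y 0, 0, 0, y 4 + s*y 0, y 5 + t*y 0] := by
    apply reach_congr (reach_trans hR (reach_M2 s t m hm' y))
    funext i; fin_cases i <;> simp [hy2, hy3] <;> first | (ring1) | (rw [← hco]; ring1) | omega
  by_cases ha0 : y 0 = 0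
  · apply final_stage rv hchar hx <;> simp [ha0]
  · set β : ℤ := 2 + (m - z)*y 0 with hβ
    have rv2 : Reach x ![y 0, β, 0, β, y 4 + s*y 0, y 5 + t*y 0] := by
      apply reach_congr (reach_trans rv (reach_move2 1 _))
      funext i; fin_cases i <;> simp <;> first | (ring1) | omega
    obtain ⟨Y, gR, g2, g3, g01, g4, g5, gda, gdb, _, gdd⟩ :=
      exists_snf (y 0).natAbs ![y 0, β, 0, β, y 4 + s*y 0, y 5 + t*y 0]
        (by simp) (by simpa using ha0)
    simp at g4 g5 gda gdb gdd
    have hRY : Reach x Y := reach_trans rv2 gR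
    have h2Y : (2:ℤ) ∣ Y 0 := (char_coords (reach_char hRY hchar)).1
    have hY2 : Y 0 ∣ 2 := by
      have h2' : (2:ℤ) = β - (m - z)*y 0 := by rw [hβ]; ring
      rw [h2']; exact dvd_sub gdb (gda.mul_left _)
    have hpm : Y 0 = 2 ∨ Y 0 = -2 := by
      have n1 : (Y 0).natAbs ∣ 2 := by
        have := Int.natAbs_dvd_natAbs.mpr hY2
        simpa using this
      have n2 : 2 ∣ (Y 0).natAbs := by
        have := Int.natAbs_dvd_natAbs.mpr h2Y
        simpa using this
      have := Nat.dvd_antisymm n1 n2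
      omega
    rcases hpm with hs | hs
    · have rfin : Reach x ![Y 1, 2, 0, 0, Y 4, Y 5] := by
        apply reach_congr (reach_trans hRY (reach_swap12 _))
        funext i; fin_cases i <;> simp [hs, g2, g3]
      apply final_stage rfin hchar hx <;> simp
    · have rfin : Reach x ![-(Y 1), 2, 0, 0, Y 4, Y 5] := by
        apply reach_congr (reach_trans (reach_trans hRY (reach_swap12 _)) (reach_neg12 _))
        funext i; fin_cases i <;> simp [hs, g2, g3]
      apply final_stage rfin hchar hx <;> simp

theorem stmt2 (k : ℤ) (hk : 0 < k) (x : Fin 6 → ℤ)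
    (hprim : IsPrimitive x) (hchar : IsCharacteristic x)
    (hx : bilT x x = -(2 * k)) :
    k ≡ 1 [ZMOD 4] ∧
      ∃ B : Matrix (Fin 6) (Fin 6) ℤ, MemOT B ∧
        B.mulVec x = ![2, (1 - k) / 2, 0, 0, 1, 1] := by
  constructor
  · have := k_mod4 hchar hx
    show k % 4 = 1 % 4
    omega
  · obtain ⟨B, hB, hBx⟩ := reach_main hprim hchar hx
    exact ⟨B, hB, hBx⟩
end

section
/- Entrywise reduction modulo the ideal (1+i) of ℤ[i], composed with the ring isomorphism ℤ[i]/(1+i) ≅ 𝔽₂, defines a group homomorphism from SU(2,2;ℤ[i]) onto the symplectic group Sp(4;𝔽₂) whose kernel is the congruence subgroup SU(2,2;ℤ[i])(1+i) = {A ∈ SU(2,2;ℤ[i]) : A ≡ I₄ mod (1+i)}. Consequently SU(2,2;ℤ[i])/SU(2,2;ℤ[i])(1+i) ≅ Sp(4;𝔽₂). -/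
open Matrix

section FormSubgroup

variable {n : Type*} [Fintype n] [DecidableEq n] {R : Type*} [CommRing R]

/-- The subgroup of `GL(n, R)` preserving the bilinear form with Gram matrix `Q`. -/
def formSubgroup (Q : Matrix n n R) : Subgroup (GL n R) where
  carrier := {B | (B : Matrix n n R)ᵀ * Q * (B : Matrix n n R) = Q}
  one_mem' := by simp
  mul_mem' := by
    intro a b ha hb
    show ((a * b : GL n R) : Matrix n n R)ᵀ * Q * ((a * b : GL n R) : Matrix n n R) = Q
    rw [Units.val_mul]
    calc ((a : Matrix n n R) * (b : Matrix n n R))ᵀ * Q *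
          ((a : Matrix n n R) * (b : Matrix n n R))
        = (b : Matrix n n R)ᵀ * ((a : Matrix n n R)ᵀ * Q * (a : Matrix n n R)) *
            (b : Matrix n n R) := by
          simp only [Matrix.transpose_mul, Matrix.mul_assoc]
      _ = Q := by rw [ha]; exact hb
  inv_mem' := by
    intro a ha
    have h1 : ((a : GL n R) : Matrix n n R) * ((a⁻¹ : GL n R) : Matrix n n R) = 1 := by
      rw [← Units.val_mul, mul_inv_cancel, Units.val_one]
    show ((a⁻¹ : GL n R) : Matrix n n R)ᵀ * Q * ((a⁻¹ : GL n R) : Matrix n n R) = Q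
    calc ((a⁻¹ : GL n R) : Matrix n n R)ᵀ * Q * ((a⁻¹ : GL n R) : Matrix n n R)
        = ((a⁻¹ : GL n R) : Matrix n n R)ᵀ *
            ((a : Matrix n n R)ᵀ * Q * (a : Matrix n n R)) *
            ((a⁻¹ : GL n R) : Matrix n n R) := by rw [ha]
      _ = ((a : Matrix n n R) * ((a⁻¹ : GL n R) : Matrix n n R))ᵀ * Q *
            ((a : Matrix n n R) * ((a⁻¹ : GL n R) : Matrix n n R)) := by
          simp only [Matrix.transpose_mul, Matrix.mul_assoc]
      _ = Q := by rw [h1]; simp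

end FormSubgroup

/-- The Gram matrix `J = [[0, I₂], [-I₂, 0]]` of the (anti-)hermitian form. -/
def J4 (R : Type*) [CommRing R] : Matrix (Fin 4) (Fin 4) R :=
  !![0, 0, 1, 0;
     0, 0, 0, 1;
     -1, 0, 0, 0;
     0, -1, 0, 0]

/-- The special unitary group `SU(2,2; R)` of matrices `A` with `Aᴴ J A = J` and
`det A = 1`, as a subgroup of `SL(4, R)`. -/
def SU22 (R : Type*) [CommRing R] [StarRing R] :
    Subgroup (Matrix.SpecialLinearGroup (Fin 4) R) where
  carrier := {A | ((A : Matrix (Fin 4) (Fin 4) R))ᴴ * J4 R *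
    (A : Matrix (Fin 4) (Fin 4) R) = J4 R}
  one_mem' := by simp
  mul_mem' := by
    intro a b ha hb
    show ((↑(a * b) : Matrix (Fin 4) (Fin 4) R))ᴴ * J4 R * (↑(a * b) : Matrix (Fin 4) (Fin 4) R) = J4 R
    rw [Matrix.SpecialLinearGroup.coe_mul]
    calc ((a : Matrix (Fin 4) (Fin 4) R) * (b : Matrix (Fin 4) (Fin 4) R))ᴴ * J4 R *
          ((a : Matrix (Fin 4) (Fin 4) R) * (b : Matrix (Fin 4) (Fin 4) R))
        = (b : Matrix (Fin 4) (Fin 4) R)ᴴ *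
            ((a : Matrix (Fin 4) (Fin 4) R)ᴴ * J4 R * (a : Matrix (Fin 4) (Fin 4) R)) *
            (b : Matrix (Fin 4) (Fin 4) R) := by
          simp only [Matrix.conjTranspose_mul, Matrix.mul_assoc]
      _ = J4 R := by rw [ha]; exact hb
  inv_mem' := by
    intro a ha
    have h1 : (a : Matrix (Fin 4) (Fin 4) R) * (↑(a⁻¹) : Matrix (Fin 4) (Fin 4) R) = 1 := by
      rw [← Matrix.SpecialLinearGroup.coe_mul, mul_inv_cancel,
        Matrix.SpecialLinearGroup.coe_one]
    show ((↑(a⁻¹) : Matrix (Fin 4) (Fin 4) R))ᴴ * J4 R * (↑(a⁻¹) : Matrix (Fin 4) (Fin 4) R) = J4 R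
    calc ((↑(a⁻¹) : Matrix (Fin 4) (Fin 4) R))ᴴ * J4 R * (↑(a⁻¹) : Matrix (Fin 4) (Fin 4) R)
        = ((↑(a⁻¹) : Matrix (Fin 4) (Fin 4) R))ᴴ *
            ((a : Matrix (Fin 4) (Fin 4) R)ᴴ * J4 R * (a : Matrix (Fin 4) (Fin 4) R)) *
            (↑(a⁻¹) : Matrix (Fin 4) (Fin 4) R) := by rw [ha]
      _ = ((a : Matrix (Fin 4) (Fin 4) R) * (↑(a⁻¹) : Matrix (Fin 4) (Fin 4) R))ᴴ * J4 R *
            ((a : Matrix (Fin 4) (Fin 4) R) * (↑(a⁻¹) : Matrix (Fin 4) (Fin 4) R)) := by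
          simp only [Matrix.conjTranspose_mul, Matrix.mul_assoc]
      _ = J4 R := by rw [h1]; simp

/-- The reduction map `ℤ[i] → ℤ[i]/(1+i) ≅ 𝔽₂`, sending `a + b·i` to `a + b mod 2`.
(This is the unique ring homomorphism `ℤ[i] → 𝔽₂`; its kernel is the ideal `(1+i)`,
so it is reduction modulo `(1+i)` composed with the isomorphism `ℤ[i]/(1+i) ≅ 𝔽₂`.) -/
def redGI : GaussianInt →+* ZMod 2 where
  toFun z := ((z.re + z.im : ℤ) : ZMod 2)
  map_one' := by norm_num
  map_zero' := by norm_num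
  map_mul' := by
    intro z w
    show (((z * w).re + (z * w).im : ℤ) : ZMod 2) = _
    rw [Zsqrtd.re_mul, Zsqrtd.im_mul]
    rw [show ((z.re + z.im : ℤ) : ZMod 2) * ((w.re + w.im : ℤ) : ZMod 2)
        = (((z.re + z.im) * (w.re + w.im) : ℤ) : ZMod 2) by push_cast; ring]
    rw [ZMod.intCast_eq_intCast_iff]
    exact Int.modEq_iff_dvd.mpr ⟨z.im * w.im, by ring⟩
  map_add' := by
    intro z w
    show (((z + w).re + (z + w).im : ℤ) : ZMod 2) = _
    rw [Zsqrtd.re_add, Zsqrtd.im_add]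
    push_cast
    ring

/-- The reduction `J̄` of the Gram matrix `J` modulo `2`. -/
def Jbar : Matrix (Fin 4) (Fin 4) (ZMod 2) :=
  !![0, 0, 1, 0;
     0, 0, 0, 1;
     1, 0, 0, 0;
     0, 1, 0, 0]

/-- The symplectic group `Sp(4; 𝔽₂)` of matrices `S` with `Sᵀ J̄ S = J̄`. -/
def Sp4F2 : Subgroup (GL (Fin 4) (ZMod 2)) := formSubgroup Jbar


section Aux

open Matrix

/-! ### Basic properties of `redGI` -/

lemma redGI_def (z : GaussianInt) : redGI z = ((z.re + z.im : ℤ) : ZMod 2) := rfl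

lemma redGI_eq_zero_iff (z : GaussianInt) :
    redGI z = 0 ↔ (⟨1, 1⟩ : GaussianInt) ∣ z := by
  rw [redGI_def, ZMod.intCast_zmod_eq_zero_iff_dvd]
  constructor
  · rintro ⟨k, hk⟩
    refine ⟨⟨k, k - z.re⟩, ?_⟩
    have h1 : ((⟨1, 1⟩ : GaussianInt) * ⟨k, k - z.re⟩).re = k - (k - z.re) := by
      simp [Zsqrtd.re_mul]
      try omega
    have h2 : ((⟨1, 1⟩ : GaussianInt) * ⟨k, k - z.re⟩).im = k + (k - z.re) := by
      simp [Zsqrtd.im_mul]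
      try omega
    push_cast at hk
    apply Zsqrtd.ext <;> omega
  · rintro ⟨w, rfl⟩
    refine ⟨w.re, ?_⟩
    have h1 : ((⟨1, 1⟩ : GaussianInt) * w).re = w.re - w.im := by
      simp [Zsqrtd.re_mul]
      try omega
    have h2 : ((⟨1, 1⟩ : GaussianInt) * w).im = w.re + w.im := by
      simp [Zsqrtd.im_mul]
      try omega
    rw [h1, h2]
    push_cast
    ring

lemma redGI_star (z : GaussianInt) : redGI (star z) = redGI z := by
  rw [redGI_def, redGI_def, Zsqrtd.re_star, Zsqrtd.im_star, ZMod.intCast_eq_intCast_iff]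
  exact Int.modEq_iff_dvd.mpr ⟨z.im, by ring⟩

lemma redGI_J4 : (J4 GaussianInt).map redGI = Jbar := by decide

lemma red_conjTranspose (A : Matrix (Fin 4) (Fin 4) GaussianInt) :
    Aᴴ.map redGI = (A.map redGI)ᵀ := by
  ext i j
  simp [Matrix.conjTranspose_apply, Matrix.map_apply, redGI_star]

/-! ### The homomorphism -/

/-- Reduction `SL(4, ℤ[i]) → GL(4, 𝔽₂)`. -/
def phiAux : Matrix.SpecialLinearGroup (Fin 4) GaussianInt →* GL (Fin 4) (ZMod 2) :=
  (Units.map (redGI.mapMatrix.toMonoidHom)).comp Matrix.SpecialLinearGroup.toGL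

lemma phiAux_coe (A : Matrix.SpecialLinearGroup (Fin 4) GaussianInt) :
    ((phiAux A : GL (Fin 4) (ZMod 2)) : Matrix (Fin 4) (Fin 4) (ZMod 2)) =
      (A : Matrix (Fin 4) (Fin 4) GaussianInt).map redGI := rfl

lemma phiAux_mem (A : ↥(SU22 GaussianInt)) :
    phiAux ((SU22 GaussianInt).subtype A) ∈ Sp4F2 := by
  have h : ((A.1 : Matrix (Fin 4) (Fin 4) GaussianInt))ᴴ * J4 GaussianInt *
      (A.1 : Matrix (Fin 4) (Fin 4) GaussianInt) = J4 GaussianInt := A.2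
  show ((phiAux A.1 : GL (Fin 4) (ZMod 2)) : Matrix (Fin 4) (Fin 4) (ZMod 2))ᵀ * Jbar *
      ((phiAux A.1 : GL (Fin 4) (ZMod 2)) : Matrix (Fin 4) (Fin 4) (ZMod 2)) = Jbar
  rw [phiAux_coe, ← red_conjTranspose, ← redGI_J4, ← Matrix.map_mul, ← Matrix.map_mul, h]

/-- The reduction homomorphism `SU(2,2;ℤ[i]) → Sp(4;𝔽₂)`. -/
def phi : ↥(SU22 GaussianInt) →* ↥Sp4F2 :=
  (phiAux.comp (SU22 GaussianInt).subtype).codRestrict Sp4F2 phiAux_mem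

lemma phi_coe (A : ↥(SU22 GaussianInt)) :
    ((phi A : GL (Fin 4) (ZMod 2)) : Matrix (Fin 4) (Fin 4) (ZMod 2)) =
      ((A : Matrix.SpecialLinearGroup (Fin 4) GaussianInt) :
        Matrix (Fin 4) (Fin 4) GaussianInt).map redGI := rfl

/-! ### Integral lifts -/

/-- An integer symplectic matrix of determinant one gives an element of `SU(2,2;ℤ[i])`. -/
def intSU (M : Matrix (Fin 4) (Fin 4) ℤ) (h1 : M.det = 1)
    (h2 : Mᵀ * J4 ℤ * M = J4 ℤ) : ↥(SU22 GaussianInt) := by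
  refine ⟨⟨(Int.castRingHom GaussianInt).mapMatrix M, ?_⟩, ?_⟩
  · rw [← RingHom.map_det, h1, _root_.map_one]
  · show ((Int.castRingHom GaussianInt).mapMatrix M)ᴴ * J4 GaussianInt *
        ((Int.castRingHom GaussianInt).mapMatrix M) = J4 GaussianInt
    have e1 : ((Int.castRingHom GaussianInt).mapMatrix M)ᴴ =
        (Int.castRingHom GaussianInt).mapMatrix Mᵀ := by
      apply Matrix.ext
      intro i j
      simp only [Matrix.conjTranspose_apply, RingHom.mapMatrix_apply, Matrix.map_apply,
        Matrix.transpose_apply, Int.coe_castRingHom, star_intCast]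
    have e2 : J4 GaussianInt = (Int.castRingHom GaussianInt).mapMatrix (J4 ℤ) := by decide
    rw [e1, e2, ← _root_.map_mul, ← _root_.map_mul, h2]

lemma intSU_red (M : Matrix (Fin 4) (Fin 4) ℤ) (h1 : M.det = 1)
    (h2 : Mᵀ * J4 ℤ * M = J4 ℤ) :
    (((intSU M h1 h2 : Matrix.SpecialLinearGroup (Fin 4) GaussianInt)) :
        Matrix (Fin 4) (Fin 4) GaussianInt).map redGI =
      M.map (fun n => (n : ZMod 2)) := by
  ext i j
  show redGI ((M i j : ℤ) : GaussianInt) = ((M i j : ℤ) : ZMod 2)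
  exact map_intCast redGI _

/-! ### The tables -/

set_option maxHeartbeats 2000000 in
def pairTable : List (Matrix (Fin 4) (Fin 4) ℤ × (Fin 4 → ZMod 2) × (Fin 4 → ZMod 2)) := [
  (!![0, 1, 0, 0; 0, 0, -1, 0; 0, 0, 0, 1; 1, 0, 0, 0], ![0, 0, 0, 1], ![0, 1, 0, 0]),
  (!![0, 1, 0, 0; 0, 0, -1, 0; 0, 0, 0, 1; 1, 0, 1, 0], ![0, 0, 0, 1], ![0, 1, 0, 1]),
  (!![0, 1, 0, 0; 0, 0, -1, 0; 0, 0, 1, 1; 1, -1, 0, 0], ![0, 0, 0, 1], ![0, 1, 1, 0]),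
  (!![0, 1, 0, 0; 0, 0, -1, 0; 0, 0, 1, 1; 1, -1, 1, 0], ![0, 0, 0, 1], ![0, 1, 1, 1]),
  (!![0, 1, 1, 0; 0, 0, -1, 0; 0, 0, 0, 1; 1, 0, 0, 1], ![0, 0, 0, 1], ![1, 1, 0, 0]),
  (!![0, 1, 1, 0; 0, 0, -1, 0; 0, 0, 0, 1; 1, 0, 1, 1], ![0, 0, 0, 1], ![1, 1, 0, 1]),
  (!![0, 1, 1, 0; 0, 0, -1, 0; 0, 0, 1, 1; 1, -1, 0, 1], ![0, 0, 0, 1], ![1, 1, 1, 0]),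
  (!![0, 1, 1, 0; 0, 0, -1, 0; 0, 0, 1, 1; 1, -1, 1, 1], ![0, 0, 0, 1], ![1, 1, 1, 1]),
  (!![0, 0, -1, 0; 0, 1, 0, 0; 1, 0, 0, 0; 0, 0, 0, 1], ![0, 0, 1, 0], ![1, 0, 0, 0]),
  (!![0, 0, -1, 0; 0, 1, 0, 0; 1, -1, 0, 0; 0, 0, 1, 1], ![0, 0, 1, 0], ![1, 0, 0, 1]),
  (!![0, 0, -1, 0; 0, 1, 0, 0; 1, 0, 1, 0; 0, 0, 0, 1], ![0, 0, 1, 0], ![1, 0, 1, 0]),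
  (!![0, 0, -1, 0; 0, 1, 0, 0; 1, -1, 1, 0; 0, 0, 1, 1], ![0, 0, 1, 0], ![1, 0, 1, 1]),
  (!![0, 0, -1, 0; 0, 1, 1, 0; 1, 0, 0, 1; 0, 0, 0, 1], ![0, 0, 1, 0], ![1, 1, 0, 0]),
  (!![0, 0, -1, 0; 0, 1, 1, 0; 1, 0, 0, 1; 0, 1, 1, 1], ![0, 0, 1, 0], ![1, 1, 0, 1]),
  (!![0, 0, -1, 0; 0, 1, 1, 0; 1, 0, 1, 1; 0, 0, 0, 1], ![0, 0, 1, 0], ![1, 1, 1, 0]),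
  (!![0, 0, -1, 0; 0, 1, 1, 0; 1, 0, 1, 1; 0, 1, 1, 1], ![0, 0, 1, 0], ![1, 1, 1, 1]),
  (!![0, 1, 0, 0; 0, -1, -1, 0; 1, 0, 0, 1; 1, 0, 0, 0], ![0, 0, 1, 1], ![0, 1, 0, 0]),
  (!![0, 1, 0, 0; 0, -1, -1, 0; 1, 0, 0, 1; 1, 1, 1, 0], ![0, 0, 1, 1], ![0, 1, 0, 1]),
  (!![0, 1, 0, 0; 0, -1, -1, 0; 1, 0, 1, 1; 1, -1, 0, 0], ![0, 0, 1, 1], ![0, 1, 1, 0]),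
  (!![0, 1, 0, 0; 0, -1, -1, 0; 1, 0, 1, 1; 1, 0, 1, 0], ![0, 0, 1, 1], ![0, 1, 1, 1]),
  (!![0, 1, 1, 0; 0, -1, -2, 0; 1, 0, 0, 2; 1, 0, 0, 1], ![0, 0, 1, 1], ![1, 0, 0, 0]),
  (!![0, 1, 1, 0; 0, -1, -2, 0; 1, -1, 0, 2; 1, 0, 1, 1], ![0, 0, 1, 1], ![1, 0, 0, 1]),
  (!![0, 1, 1, 0; 0, -1, -2, 0; 1, 1, 1, 2; 1, 0, 0, 1], ![0, 0, 1, 1], ![1, 0, 1, 0]),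
  (!![0, 1, 1, 0; 0, -1, -2, 0; 1, 0, 1, 2; 1, 0, 1, 1], ![0, 0, 1, 1], ![1, 0, 1, 1]),
  (!![0, 1, 0, 0; 1, 0, 0, 0; 0, 0, 0, 1; 0, 0, 1, 0], ![0, 1, 0, 0], ![0, 0, 0, 1]),
  (!![0, 1, 0, 0; 1, -1, 0, 0; 0, 0, 1, 1; 0, 0, 1, 0], ![0, 1, 0, 0], ![0, 0, 1, 1]),
  (!![0, 1, 0, 0; 1, 0, 1, 0; 0, 0, 0, 1; 0, 0, 1, 0], ![0, 1, 0, 0], ![0, 1, 0, 1]),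
  (!![0, 1, 0, 0; 1, -1, 1, 0; 0, 0, 1, 1; 0, 0, 1, 0], ![0, 1, 0, 0], ![0, 1, 1, 1]),
  (!![0, 1, 1, 0; 1, 0, 0, 1; 0, 0, 0, 1; 0, 0, 1, 0], ![0, 1, 0, 0], ![1, 0, 0, 1]),
  (!![0, 1, 1, 0; 1, -1, 0, 1; 0, 0, 1, 1; 0, 0, 1, 0], ![0, 1, 0, 0], ![1, 0, 1, 1]),
  (!![0, 1, 1, 0; 1, 0, 1, 1; 0, 0, 0, 1; 0, 0, 1, 0], ![0, 1, 0, 0], ![1, 1, 0, 1]),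
  (!![0, 1, 1, 0; 1, -1, 1, 1; 0, 0, 1, 1; 0, 0, 1, 0], ![0, 1, 0, 0], ![1, 1, 1, 1]),
  (!![0, 1, 0, 0; 1, 0, 0, 0; 0, 0, 0, 1; 1, 0, 1, 0], ![0, 1, 0, 1], ![0, 0, 0, 1]),
  (!![0, 1, 0, 0; 1, -1, 0, 0; 0, 0, 1, 1; 1, -1, 1, 0], ![0, 1, 0, 1], ![0, 0, 1, 1]),
  (!![0, 1, 0, 0; 1, 0, 1, 0; 0, 0, 0, 1; 1, 0, 2, 0], ![0, 1, 0, 1], ![0, 1, 0, 0]),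
  (!![0, 1, 0, 0; 1, -1, 1, 0; 0, 0, 1, 1; 1, -1, 2, 0], ![0, 1, 0, 1], ![0, 1, 1, 0]),
  (!![0, 1, 1, 0; 1, 0, 0, 1; 0, 0, 0, 1; 1, 0, 1, 1], ![0, 1, 0, 1], ![1, 0, 0, 1]),
  (!![0, 1, 1, 0; 1, -1, 0, 1; 0, 0, 1, 1; 1, -1, 1, 1], ![0, 1, 0, 1], ![1, 0, 1, 1]),
  (!![0, 1, 1, 0; 1, 0, 1, 1; 0, 0, 0, 1; 1, 0, 2, 1], ![0, 1, 0, 1], ![1, 1, 0, 0]),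
  (!![0, 1, 1, 0; 1, -1, 1, 1; 0, 0, 1, 1; 1, -1, 2, 1], ![0, 1, 0, 1], ![1, 1, 1, 0]),
  (!![0, 1, 0, 0; 1, 0, 0, 0; 1, 0, 0, 1; 0, 1, 1, 0], ![0, 1, 1, 0], ![0, 0, 0, 1]),
  (!![0, 1, 0, 0; 1, -1, 0, 0; 1, 0, 1, 1; 0, 1, 1, 0], ![0, 1, 1, 0], ![0, 0, 1, 1]),
  (!![0, 1, 0, 0; 1, 1, 1, 0; 1, 0, 0, 1; 0, 1, 1, 0], ![0, 1, 1, 0], ![0, 1, 0, 1]),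
  (!![0, 1, 0, 0; 1, 0, 1, 0; 1, 0, 1, 1; 0, 1, 1, 0], ![0, 1, 1, 0], ![0, 1, 1, 1]),
  (!![0, 1, 1, 0; 1, 0, 0, 1; 1, 0, 0, 2; 0, 1, 2, 0], ![0, 1, 1, 0], ![1, 0, 0, 0]),
  (!![0, 1, 1, 0; 1, 0, 0, 1; 1, 1, 1, 2; 0, 1, 2, 0], ![0, 1, 1, 0], ![1, 0, 1, 0]),
  (!![0, 1, 1, 0; 1, 0, 1, 1; 1, -1, 0, 2; 0, 1, 2, 0], ![0, 1, 1, 0], ![1, 1, 0, 0]),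
  (!![0, 1, 1, 0; 1, 0, 1, 1; 1, 0, 1, 2; 0, 1, 2, 0], ![0, 1, 1, 0], ![1, 1, 1, 0]),
  (!![0, 1, 0, 0; 1, 0, 0, 0; 1, 0, 0, 1; 1, 1, 1, 0], ![0, 1, 1, 1], ![0, 0, 0, 1]),
  (!![0, 1, 0, 0; 1, -1, 0, 0; 1, 0, 1, 1; 1, 0, 1, 0], ![0, 1, 1, 1], ![0, 0, 1, 1]),
  (!![0, 1, 0, 0; 1, 1, 1, 0; 1, 0, 0, 1; 1, 2, 2, 0], ![0, 1, 1, 1], ![0, 1, 0, 0]),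
  (!![0, 1, 0, 0; 1, 0, 1, 0; 1, 0, 1, 1; 1, 1, 2, 0], ![0, 1, 1, 1], ![0, 1, 1, 0]),
  (!![0, 1, 1, 0; 1, -1, 0, 1; 1, -2, 0, 2; 1, 0, 2, 1], ![0, 1, 1, 1], ![1, 0, 0, 0]),
  (!![0, 1, 1, 0; 1, -1, 0, 1; 1, -1, 1, 2; 1, 0, 2, 1], ![0, 1, 1, 1], ![1, 0, 1, 0]),
  (!![0, 1, 1, 0; 1, -1, 1, 1; 1, -3, 0, 2; 1, 0, 3, 1], ![0, 1, 1, 1], ![1, 1, 0, 1]),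
  (!![0, 1, 1, 0; 1, -1, 1, 1; 1, -2, 1, 2; 1, 0, 3, 1], ![0, 1, 1, 1], ![1, 1, 1, 1]),
  (!![1, 0, 0, 0; 0, 1, 0, 0; 0, 0, 1, 0; 0, 0, 0, 1], ![1, 0, 0, 0], ![0, 0, 1, 0]),
  (!![1, 0, 0, 1; 0, 0, 0, -1; 0, 0, 1, 0; 0, 1, 1, 0], ![1, 0, 0, 0], ![0, 0, 1, 1]),
  (!![1, 0, 0, 1; 0, 1, 1, 0; 0, 0, 1, 0; 0, 0, 0, 1], ![1, 0, 0, 0], ![0, 1, 1, 0]),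
  (!![1, 0, 0, 1; 0, 1, 1, -1; 0, 0, 1, 0; 0, 1, 1, 0], ![1, 0, 0, 0], ![0, 1, 1, 1]),
  (!![1, 0, 1, 0; 0, 1, 0, 0; 0, 0, 1, 0; 0, 0, 0, 1], ![1, 0, 0, 0], ![1, 0, 1, 0]),
  (!![1, 0, 1, 1; 0, 0, 0, -1; 0, 0, 1, 0; 0, 1, 1, 0], ![1, 0, 0, 0], ![1, 0, 1, 1]),
  (!![1, 0, 1, 1; 0, 1, 1, 0; 0, 0, 1, 0; 0, 0, 0, 1], ![1, 0, 0, 0], ![1, 1, 1, 0]),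
  (!![1, 0, 1, 1; 0, 1, 1, -1; 0, 0, 1, 0; 0, 1, 1, 0], ![1, 0, 0, 0], ![1, 1, 1, 1]),
  (!![1, 0, 0, 0; 0, 1, 0, 0; 0, 1, 1, 0; 1, 0, 0, 1], ![1, 0, 0, 1], ![0, 0, 1, 0]),
  (!![1, 0, 0, 1; 0, 0, 0, -1; 0, 0, 1, -1; 1, 1, 1, 0], ![1, 0, 0, 1], ![0, 0, 1, 1]),
  (!![1, 0, 0, 1; 0, 1, 1, 0; 0, 1, 2, 0; 1, 0, 0, 2], ![1, 0, 0, 1], ![0, 1, 0, 0]),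
  (!![1, 0, 0, 1; 0, 1, 1, 0; 0, 1, 2, 0; 1, 1, 1, 2], ![1, 0, 0, 1], ![0, 1, 0, 1]),
  (!![1, 1, 1, 0; 0, 1, 0, 0; 0, 1, 1, 0; 1, 0, 0, 1], ![1, 0, 0, 1], ![1, 0, 1, 0]),
  (!![1, 0, 1, 0; 0, 1, 0, 0; 0, 1, 1, 0; 1, 0, 1, 1], ![1, 0, 0, 1], ![1, 0, 1, 1]),
  (!![1, 0, 1, 1; 0, 1, 1, 0; 0, 1, 2, 0; 1, -1, 0, 2], ![1, 0, 0, 1], ![1, 1, 0, 0]),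
  (!![1, 0, 1, 1; 0, 1, 1, 0; 0, 1, 2, 0; 1, 0, 1, 2], ![1, 0, 0, 1], ![1, 1, 0, 1]),
  (!![1, 0, 0, 0; 0, 1, 0, 0; 1, 0, 1, 0; 0, 0, 0, 1], ![1, 0, 1, 0], ![0, 0, 1, 0]),
  (!![1, 0, 0, 1; 0, 0, 0, -1; 1, 0, 1, 1; 0, 1, 1, 0], ![1, 0, 1, 0], ![0, 0, 1, 1]),
  (!![1, 0, 0, 1; 0, 1, 1, 0; 1, 0, 1, 1; 0, 0, 0, 1], ![1, 0, 1, 0], ![0, 1, 1, 0]),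
  (!![1, 0, 0, 1; 0, 1, 1, -1; 1, 0, 1, 1; 0, 1, 1, 0], ![1, 0, 1, 0], ![0, 1, 1, 1]),
  (!![1, 0, 1, 0; 0, 1, 0, 0; 1, 0, 2, 0; 0, 0, 0, 1], ![1, 0, 1, 0], ![1, 0, 0, 0]),
  (!![1, 0, 1, 1; 0, 0, 0, -1; 1, 0, 2, 1; 0, 1, 1, 0], ![1, 0, 1, 0], ![1, 0, 0, 1]),
  (!![1, 0, 1, 1; 0, 1, 1, 0; 1, 0, 2, 1; 0, 0, 0, 1], ![1, 0, 1, 0], ![1, 1, 0, 0]),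
  (!![1, 0, 1, 1; 0, 1, 1, -1; 1, 0, 2, 1; 0, 1, 1, 0], ![1, 0, 1, 0], ![1, 1, 0, 1]),
  (!![1, 0, 0, 0; 0, 1, 0, 0; 1, 1, 1, 0; 1, 0, 0, 1], ![1, 0, 1, 1], ![0, 0, 1, 0]),
  (!![1, 0, 0, 1; 0, 0, 0, -1; 1, 0, 1, 0; 1, 1, 1, 0], ![1, 0, 1, 1], ![0, 0, 1, 1]),
  (!![1, 0, 0, 1; 0, 1, 1, -1; 1, 1, 2, 0; 1, 0, 0, 2], ![1, 0, 1, 1], ![0, 1, 0, 0]),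
  (!![1, 0, 0, 1; 0, 1, 1, -1; 1, 1, 2, 0; 1, 1, 1, 1], ![1, 0, 1, 1], ![0, 1, 0, 1]),
  (!![1, 1, 1, 0; 0, 1, 0, 0; 1, 2, 2, 0; 1, 0, 0, 1], ![1, 0, 1, 1], ![1, 0, 0, 0]),
  (!![1, 0, 1, 0; 0, 1, 0, 0; 1, 1, 2, 0; 1, 0, 1, 1], ![1, 0, 1, 1], ![1, 0, 0, 1]),
  (!![1, 0, 1, 1; 0, 1, 1, -1; 1, 1, 3, 0; 1, -1, 0, 3], ![1, 0, 1, 1], ![1, 1, 1, 0]),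
  (!![1, 0, 1, 1; 0, 1, 1, -1; 1, 1, 3, 0; 1, 0, 1, 2], ![1, 0, 1, 1], ![1, 1, 1, 1]),
  (!![1, 1, 0, 0; 1, 0, 0, 0; 0, 0, 0, 1; 0, 0, 1, -1], ![1, 1, 0, 0], ![0, 0, 0, 1]),
  (!![1, 0, 0, 0; 1, 0, 0, 1; 0, 1, 1, 0; 0, -1, 0, 0], ![1, 1, 0, 0], ![0, 0, 1, 0]),
  (!![1, 0, 0, 1; 1, 1, 1, 0; 0, -1, 0, 0; 0, 1, 1, 0], ![1, 1, 0, 0], ![0, 1, 0, 1]),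
  (!![1, 0, 0, 1; 1, 1, 1, 0; 0, 0, 1, -1; 0, 0, 0, 1], ![1, 1, 0, 0], ![0, 1, 1, 0]),
  (!![1, 1, 1, 0; 1, 0, 0, 1; 0, 0, 0, 1; 0, 0, 1, -1], ![1, 1, 0, 0], ![1, 0, 0, 1]),
  (!![1, 1, 1, 0; 1, 0, 0, 1; 0, 1, 1, 0; 0, -1, 0, 0], ![1, 1, 0, 0], ![1, 0, 1, 0]),
  (!![1, 1, 1, 0; 1, 0, 1, 0; 0, 0, 0, 1; 0, 0, 1, -1], ![1, 1, 0, 0], ![1, 1, 0, 1]),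
  (!![1, 0, 1, 0; 1, 0, 1, 1; 0, 1, 1, 0; 0, -1, 0, 0], ![1, 1, 0, 0], ![1, 1, 1, 0]),
  (!![1, 1, 0, 0; 1, 0, 0, 0; 0, 0, 0, 1; 1, 0, 1, -1], ![1, 1, 0, 1], ![0, 0, 0, 1]),
  (!![1, 0, 0, 0; 1, 0, 0, 1; 0, 1, 1, 0; 1, -1, 0, 1], ![1, 1, 0, 1], ![0, 0, 1, 0]),
  (!![1, 0, 0, 1; 1, 1, 1, 0; 0, -1, 0, 0; 1, 2, 2, 0], ![1, 1, 0, 1], ![0, 1, 0, 0]),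
  (!![1, 0, 0, 1; 1, 1, 1, -1; 0, 0, 1, -1; 1, 1, 1, 0], ![1, 1, 0, 1], ![0, 1, 1, 1]),
  (!![1, 1, 1, 0; 1, 0, 0, 1; 0, 0, 0, 1; 1, 0, 1, 0], ![1, 1, 0, 1], ![1, 0, 0, 1]),
  (!![1, 1, 1, 0; 1, 1, 0, 1; 0, 1, 1, 0; 1, 0, 0, 1], ![1, 1, 0, 1], ![1, 0, 1, 0]),
  (!![1, 1, 1, 0; 1, 0, 1, 0; 0, 0, 0, 1; 1, 0, 2, -1], ![1, 1, 0, 1], ![1, 1, 0, 0]),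
  (!![1, 0, 1, 0; 1, 0, 1, 1; 0, 1, 1, 0; 1, -1, 1, 1], ![1, 1, 0, 1], ![1, 1, 1, 1]),
  (!![1, 1, 0, 0; 1, 0, 0, 0; 1, 0, 0, 1; 0, 1, 1, -1], ![1, 1, 1, 0], ![0, 0, 0, 1]),
  (!![1, 0, 0, 0; 1, 0, 0, 1; 1, 1, 1, 0; 0, -1, 0, 0], ![1, 1, 1, 0], ![0, 0, 1, 0]),
  (!![1, 0, 0, 1; 1, 1, 1, 1; 1, -1, 0, 0; 0, 1, 1, 1], ![1, 1, 1, 0], ![0, 1, 0, 1]),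
  (!![1, 0, 0, 1; 1, 1, 1, 0; 1, 0, 1, 0; 0, 0, 0, 1], ![1, 1, 1, 0], ![0, 1, 1, 0]),
  (!![1, 1, 1, 0; 1, 0, 0, 1; 1, 0, 0, 2; 0, 1, 2, -2], ![1, 1, 1, 0], ![1, 0, 0, 0]),
  (!![1, 1, 1, 0; 1, -1, 0, 1; 1, 0, 1, 1; 0, 1, 1, -1], ![1, 1, 1, 0], ![1, 0, 1, 1]),
  (!![1, 2, 1, 0; 1, 1, 1, 0; 1, 0, 0, 1; 0, 2, 2, -1], ![1, 1, 1, 0], ![1, 1, 0, 0]),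
  (!![1, 1, 1, 0; 1, 0, 1, 0; 1, 0, 1, 1; 0, 1, 1, -1], ![1, 1, 1, 0], ![1, 1, 1, 1]),
  (!![1, 1, 0, 0; 1, 0, 0, 0; 1, 0, 0, 1; 1, 1, 1, -1], ![1, 1, 1, 1], ![0, 0, 0, 1]),
  (!![1, 0, 0, 0; 1, 0, 0, 1; 1, 1, 1, 0; 1, -1, 0, 1], ![1, 1, 1, 1], ![0, 0, 1, 0]),
  (!![1, 0, 0, 1; 1, 1, 1, 1; 1, -1, 0, 0; 1, 2, 2, 2], ![1, 1, 1, 1], ![0, 1, 0, 0]),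
  (!![1, 0, 0, 1; 1, 1, 1, -1; 1, 0, 1, 0; 1, 1, 1, 0], ![1, 1, 1, 1], ![0, 1, 1, 1]),
  (!![1, 1, 1, 0; 1, 1, 0, 1; 1, 2, 0, 2; 1, 0, 2, -1], ![1, 1, 1, 1], ![1, 0, 0, 0]),
  (!![1, 1, 1, 0; 1, -1, 0, 1; 1, 0, 1, 1; 1, 0, 1, 0], ![1, 1, 1, 1], ![1, 0, 1, 1]),
  (!![1, 2, 1, 0; 1, 1, 1, 0; 1, 0, 0, 1; 1, 3, 3, -1], ![1, 1, 1, 1], ![1, 1, 0, 1]),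
  (!![1, 1, 1, 0; 1, 0, 1, 0; 1, 0, 1, 1; 1, 1, 2, -1], ![1, 1, 1, 1], ![1, 1, 1, 0])]

def sixTable : List (Matrix (Fin 4) (Fin 4) ℤ × Matrix (Fin 4) (Fin 4) (ZMod 2)) := [
  (!![1, 0, 0, 0; 0, 1, 0, 0; 0, 0, 1, 0; 0, 0, 0, 1], !![1, 0, 0, 0; 0, 1, 0, 0; 0, 0, 1, 0; 0, 0, 0, 1]),
  (!![1, 0, 0, 0; 0, 1, 0, 1; 0, 0, 1, 0; 0, 0, 0, 1], !![1, 0, 0, 0; 0, 1, 0, 1; 0, 0, 1, 0; 0, 0, 0, 1]),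
  (!![1, 0, 0, 0; 0, 1, 0, 0; 0, 0, 1, 0; 0, 1, 0, 1], !![1, 0, 0, 0; 0, 1, 0, 0; 0, 0, 1, 0; 0, 1, 0, 1]),
  (!![1, 0, 0, 0; 0, 0, 0, 1; 0, 0, 1, 0; 0, -1, 0, 0], !![1, 0, 0, 0; 0, 0, 0, 1; 0, 0, 1, 0; 0, 1, 0, 0]),
  (!![1, 0, 0, 0; 0, 0, 0, 1; 0, 0, 1, 0; 0, -1, 0, 1], !![1, 0, 0, 0; 0, 0, 0, 1; 0, 0, 1, 0; 0, 1, 0, 1]),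
  (!![1, 0, 0, 0; 0, 1, 0, 1; 0, 0, 1, 0; 0, -1, 0, 0], !![1, 0, 0, 0; 0, 1, 0, 1; 0, 0, 1, 0; 0, 1, 0, 0])]


set_option maxRecDepth 10000

set_option maxHeartbeats 4000000 in
lemma pairTable_good : ∀ p ∈ pairTable, p.1.det = 1 ∧ p.1ᵀ * J4 ℤ * p.1 = J4 ℤ ∧
    (∀ i, ((p.1 i 0 : ℤ) : ZMod 2) = p.2.1 i) ∧ (∀ i, ((p.1 i 2 : ℤ) : ZMod 2) = p.2.2 i) := by
  decide

set_option maxHeartbeats 8000000 in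
lemma pairTable_cover : ∀ u0 u1 u2 u3 v0 v1 v2 v3 : ZMod 2,
    u0*v2 + u1*v3 + u2*v0 + u3*v1 = 1 →
    ∃ p ∈ pairTable, p.2.1 = ![u0,u1,u2,u3] ∧ p.2.2 = ![v0,v1,v2,v3] := by decide

set_option maxHeartbeats 4000000 in
lemma sixTable_good : ∀ q ∈ sixTable, q.1.det = 1 ∧ q.1ᵀ * J4 ℤ * q.1 = J4 ℤ ∧
    q.1.map (fun n => (n : ZMod 2)) = q.2 := by decide

set_option maxHeartbeats 8000000 in
lemma sixTable_cover : ∀ b0 b1 b2 b3 d0 d1 d2 d3 : ZMod 2,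
    (!![1,b0,0,d0; 0,b1,0,d1; 0,b2,1,d2; 0,b3,0,d3])ᵀ * Jbar *
      !![1,b0,0,d0; 0,b1,0,d1; 0,b2,1,d2; 0,b3,0,d3] = Jbar →
    ∃ q ∈ sixTable, q.2 = !![1,b0,0,d0; 0,b1,0,d1; 0,b2,1,d2; 0,b3,0,d3] := by decide

/-! ### Surjectivity -/

set_option maxHeartbeats 1600000 in
lemma phi_surjective : Function.Surjective phi := by
  intro s
  set S : Matrix (Fin 4) (Fin 4) (ZMod 2) := ((s : GL (Fin 4) (ZMod 2)) :
    Matrix (Fin 4) (Fin 4) (ZMod 2)) with hSdef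
  have hs : Sᵀ * Jbar * S = Jbar := s.2
  -- Stage 1: the first and third columns of `S` form a hyperbolic pair.
  have h02 : S 0 0 * S 2 2 + S 1 0 * S 3 2 + S 2 0 * S 0 2 + S 3 0 * S 1 2 = 1 := by
    have h := congrFun (congrFun hs 0) 2
    simp [Matrix.mul_apply, Fin.sum_univ_four, Jbar, Matrix.transpose_apply] at h
    linear_combination h
  obtain ⟨p, hp, hu, hv⟩ := pairTable_cover (S 0 0) (S 1 0) (S 2 0) (S 3 0)
    (S 0 2) (S 1 2) (S 2 2) (S 3 2) h02
  obtain ⟨hdet, hJ, hc0, hc2⟩ := pairTable_good p hp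
  set A1 : ↥(SU22 GaussianInt) := intSU p.1 hdet hJ with hA1
  set N : Matrix (Fin 4) (Fin 4) (ZMod 2) :=
    ((phi A1 : GL (Fin 4) (ZMod 2)) : Matrix (Fin 4) (Fin 4) (ZMod 2)) with hNdef
  have hNred : N = p.1.map (fun n => (n : ZMod 2)) := by
    rw [hNdef, phi_coe]; exact intSU_red p.1 hdet hJ
  have hN0 : ∀ i, N i 0 = S i 0 := by
    intro i
    have : N i 0 = p.2.1 i := by rw [hNred]; exact hc0 i
    rw [this, hu]
    fin_cases i <;> rfl
  have hN2 : ∀ i, N i 2 = S i 2 := by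
    intro i
    have : N i 2 = p.2.2 i := by rw [hNred]; exact hc2 i
    rw [this, hv]
    fin_cases i <;> rfl
  -- Stage 2: reduce to the stabiliser of the pair.
  set g : ↥Sp4F2 := (phi A1)⁻¹ * s with hg
  set G : Matrix (Fin 4) (Fin 4) (ZMod 2) := ((g : GL (Fin 4) (ZMod 2)) :
    Matrix (Fin 4) (Fin 4) (ZMod 2)) with hGdef
  set Ninv : Matrix (Fin 4) (Fin 4) (ZMod 2) :=
    ((phi A1 : GL (Fin 4) (ZMod 2))⁻¹).val with hNinvdef
  have hGeq : G = Ninv * S := rfl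
  have hNinvN : Ninv * N = 1 := (phi A1 : GL (Fin 4) (ZMod 2)).inv_mul
  have hGcol0 : ∀ i, G i 0 = (1 : Matrix (Fin 4) (Fin 4) (ZMod 2)) i 0 := by
    intro i
    rw [hGeq, ← hNinvN]
    simp only [Matrix.mul_apply]
    exact Finset.sum_congr rfl fun k _ => by rw [hN0 k]
  have hGcol2 : ∀ i, G i 2 = (1 : Matrix (Fin 4) (Fin 4) (ZMod 2)) i 2 := by
    intro i
    rw [hGeq, ← hNinvN]
    simp only [Matrix.mul_apply]
    exact Finset.sum_congr rfl fun k _ => by rw [hN2 k]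
  have hGform : G = !![1, G 0 1, 0, G 0 3; 0, G 1 1, 0, G 1 3;
      0, G 2 1, 1, G 2 3; 0, G 3 1, 0, G 3 3] := by
    have e00 : G 0 0 = 1 := by rw [hGcol0 0]; decide
    have e10 : G 1 0 = 0 := by rw [hGcol0 1]; decide
    have e20 : G 2 0 = 0 := by rw [hGcol0 2]; decide
    have e30 : G 3 0 = 0 := by rw [hGcol0 3]; decide
    have e02 : G 0 2 = 0 := by rw [hGcol2 0]; decide
    have e12 : G 1 2 = 0 := by rw [hGcol2 1]; decide
    have e22 : G 2 2 = 1 := by rw [hGcol2 2]; decide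
    have e32 : G 3 2 = 0 := by rw [hGcol2 3]; decide
    apply Matrix.ext
    intro i j
    fin_cases i <;> fin_cases j <;>
      simp [e00, e10, e20, e30, e02, e12, e22, e32] <;> rfl
  have hgs : Gᵀ * Jbar * G = Jbar := g.2
  obtain ⟨q, hq, hq2⟩ := sixTable_cover (G 0 1) (G 1 1) (G 2 1) (G 3 1)
    (G 0 3) (G 1 3) (G 2 3) (G 3 3) (by rw [← hGform]; exact hgs)
  obtain ⟨qdet, qJ, qred⟩ := sixTable_good q hq
  refine ⟨A1 * intSU q.1 qdet qJ, ?_⟩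
  have hphi2 : phi (intSU q.1 qdet qJ) = g := by
    apply Subtype.ext
    apply Units.ext
    show ((phi (intSU q.1 qdet qJ) : GL (Fin 4) (ZMod 2)) :
      Matrix (Fin 4) (Fin 4) (ZMod 2)) = G
    rw [phi_coe, intSU_red q.1 qdet qJ, qred, hq2, ← hGform]
  rw [MonoidHom.map_mul, hphi2, hg, mul_inv_cancel_left]

end Aux

theorem stmt8 :
    (∀ z : GaussianInt, redGI z = 0 ↔ (⟨1, 1⟩ : GaussianInt) ∣ z) ∧
    ∃ φ : ↥(SU22 GaussianInt) →* ↥Sp4F2,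
      (∀ A : ↥(SU22 GaussianInt),
        ((φ A : GL (Fin 4) (ZMod 2)) : Matrix (Fin 4) (Fin 4) (ZMod 2)) =
          ((A : Matrix.SpecialLinearGroup (Fin 4) GaussianInt) :
            Matrix (Fin 4) (Fin 4) GaussianInt).map (⇑redGI)) ∧
      Function.Surjective φ ∧
      ∀ A : ↥(SU22 GaussianInt), φ A = 1 ↔
        ∀ i j : Fin 4, (⟨1, 1⟩ : GaussianInt) ∣
          (((A : Matrix.SpecialLinearGroup (Fin 4) GaussianInt) :
              Matrix (Fin 4) (Fin 4) GaussianInt) i j -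
            (1 : Matrix (Fin 4) (Fin 4) GaussianInt) i j) := by
  refine ⟨redGI_eq_zero_iff, phi, ?_, phi_surjective, ?_⟩
  · intro A
    rw [phi_coe]
  · intro A
    have h1 : phi A = 1 ↔
        ((A : Matrix.SpecialLinearGroup (Fin 4) GaussianInt) :
          Matrix (Fin 4) (Fin 4) GaussianInt).map redGI = 1 := by
      rw [← phi_coe]
      constructor
      · intro h; rw [h]; rfl
      · intro h
        apply Subtype.ext
        apply Units.ext
        exact h
    rw [h1, ← Matrix.ext_iff]
    apply forall_congr'
    intro i
    apply forall_congr'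
    intro j
    rw [← redGI_eq_zero_iff, map_sub]
    have hone : redGI ((1 : Matrix (Fin 4) (Fin 4) GaussianInt) i j) =
        (1 : Matrix (Fin 4) (Fin 4) (ZMod 2)) i j := by
      by_cases h : i = j <;> simp [Matrix.one_apply, h]
    rw [hone, sub_eq_zero]
    rfl
end

section
/- Let y ∈ Y with Δ = Δ(y) > 0. Then the quadratic space over ℚ obtained by restricting the form ⟨x,x⟩ = xᵀGx to the 5-dimensional subspace y^⊥ = {x ∈ ℚ⁶ : ⟨x,y⟩ = 0} is equivalent over ℚ to the quadratic form U ⊥ ⟨−2⟩ ⊥ ⟨−2⟩ ⊥ ⟨2Δ⟩ (a hyperbolic plane orthogonally summed with the diagonal form diag(−2, −2, 2Δ)). -/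
open Matrix

/-- Gram matrix of the lattice `T = U ⊥ U ⊥ ⟨-1⟩ ⊥ ⟨-1⟩`, over `ℚ`. -/
def GQ : Matrix (Fin 6) (Fin 6) ℚ :=
  !![0, 1, 0, 0, 0, 0;
     1, 0, 0, 0, 0, 0;
     0, 0, 0, 1, 0, 0;
     0, 0, 1, 0, 0, 0;
     0, 0, 0, 0, -1, 0;
     0, 0, 0, 0, 0, -1]

/-- The bilinear form `⟨x, y⟩ = xᵀ G y` on `ℚ⁶`. -/
def bilQ (x y : Fin 6 → ℚ) : ℚ := x ⬝ᵥ GQ.mulVec y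

/-- The orthogonal complement `y^⊥ = {x ∈ ℚ⁶ : ⟨x, y⟩ = 0}`. -/
def perpQ (y : Fin 6 → ℚ) : Submodule ℚ (Fin 6 → ℚ) where
  carrier := {x | bilQ x y = 0}
  add_mem' := by
    intro a b ha hb
    show bilQ (a + b) y = 0
    have ha' : bilQ a y = 0 := ha
    have hb' : bilQ b y = 0 := hb
    simp only [bilQ, add_dotProduct] at *
    rw [ha', hb', add_zero]
  zero_mem' := by
    show bilQ 0 y = 0
    simp [bilQ]
  smul_mem' := by
    intro r a ha
    show bilQ (r • a) y = 0
    have ha' : bilQ a y = 0 := ha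
    simp only [bilQ, smul_dotProduct] at *
    rw [ha', smul_zero]

/-- The vector `(2y₁, 2y₂, 2y₃, 2y₄, y₅ + y₆, y₅ - y₆)` determined by parameters `y ∈ ℤ⁶`. -/
def Yvec (c : Fin 6 → ℤ) : Fin 6 → ℤ :=
  ![2 * c 0, 2 * c 1, 2 * c 2, 2 * c 3, c 4 + c 5, c 4 - c 5]

/-- The invariant `Δ(y) = y₅² + y₆² - 4(y₁y₂ + y₃y₄)`, so that `⟨y, y⟩ = -2Δ(y)`. -/
def Δval (c : Fin 6 → ℤ) : ℤ :=
  (c 4) ^ 2 + (c 5) ^ 2 - 4 * (c 0 * c 1 + c 2 * c 3)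

/-- Gram matrix of the rational quadratic form `U ⊥ ⟨-2⟩ ⊥ ⟨-2⟩ ⊥ ⟨2Δ⟩`. -/
def G5 (Δ : ℚ) : Matrix (Fin 5) (Fin 5) ℚ :=
  !![0, 1, 0, 0, 0;
     1, 0, 0, 0, 0;
     0, 0, -2, 0, 0;
     0, 0, 0, -2, 0;
     0, 0, 0, 0, 2 * Δ]

/- ### Auxiliary lemmas -/

section vecsimp
variable {α : Type*} (a b c d e f : α)
lemma v6_0 : ![a,b,c,d,e,f] 0 = a := rfl
lemma v6_1 : ![a,b,c,d,e,f] 1 = b := rfl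
lemma v6_2 : ![a,b,c,d,e,f] 2 = c := rfl
lemma v6_3 : ![a,b,c,d,e,f] 3 = d := rfl
lemma v6_4 : ![a,b,c,d,e,f] 4 = e := rfl
lemma v6_5 : ![a,b,c,d,e,f] 5 = f := rfl
lemma v5_0 : ![a,b,c,d,e] 0 = a := rfl
lemma v5_1 : ![a,b,c,d,e] 1 = b := rfl
lemma v5_2 : ![a,b,c,d,e] 2 = c := rfl
lemma v5_3 : ![a,b,c,d,e] 3 = d := rfl
lemma v5_4 : ![a,b,c,d,e] 4 = e := rfl
end vecsimp

lemma bilQ_expand (x z : Fin 6 → ℚ) :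
    bilQ x z = x 0 * z 1 + x 1 * z 0 + x 2 * z 3 + x 3 * z 2 - x 4 * z 4 - x 5 * z 5 := by
  simp only [bilQ, GQ, mulVec, dotProduct, Fin.sum_univ_six, Matrix.of_apply,
    v6_0, v6_1, v6_2, v6_3, v6_4, v6_5]
  ring

lemma G5_expand (Δ : ℚ) (v : Fin 5 → ℚ) :
    v ⬝ᵥ (G5 Δ).mulVec v = 2 * (v 0 * v 1) - 2 * (v 2)^2 - 2 * (v 3)^2 + 2 * Δ * (v 4)^2 := by
  simp only [G5, mulVec, dotProduct, Fin.sum_univ_five, Matrix.of_apply,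
    v5_0, v5_1, v5_2, v5_3, v5_4]
  ring

lemma bilQ_symm (x z : Fin 6 → ℚ) : bilQ x z = bilQ z x := by
  rw [bilQ_expand, bilQ_expand]; ring

lemma bilQ_sub_smul_left (x v z : Fin 6 → ℚ) (a : ℚ) :
    bilQ (x - a • v) z = bilQ x z - a * bilQ v z := by
  simp only [bilQ_expand, Pi.sub_apply, Pi.smul_apply, smul_eq_mul]; ring

lemma bilQ_sub_smul_right (x v z : Fin 6 → ℚ) (a : ℚ) :
    bilQ x (z - a • v) = bilQ x z - a * bilQ x v := by
  simp only [bilQ_expand, Pi.sub_apply, Pi.smul_apply, smul_eq_mul]; ring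

lemma bilQ_smul_right (x v : Fin 6 → ℚ) (a : ℚ) :
    bilQ x (a • v) = a * bilQ x v := by
  simp only [bilQ_expand, Pi.smul_apply, smul_eq_mul]; ring

lemma bilQ_add_left (x x' z : Fin 6 → ℚ) :
    bilQ (x + x') z = bilQ x z + bilQ x' z := by
  simp only [bilQ_expand, Pi.add_apply]; ring

lemma bilQ_smul_left (x z : Fin 6 → ℚ) (a : ℚ) :
    bilQ (a • x) z = a * bilQ x z := by
  simp only [bilQ_expand, Pi.smul_apply, smul_eq_mul]; ring

/-- The standard vector of norm `-2Δ`. -/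
def yzero (Δ : ℚ) : Fin 6 → ℚ := ![1, -Δ, 0, 0, 0, 0]

/-- Reflection in the vector `v` (with `k = ⟨v,v⟩`). -/
def refl6 (v : Fin 6 → ℚ) (k : ℚ) (x : Fin 6 → ℚ) : Fin 6 → ℚ :=
  x - ((2 * bilQ x v) / k) • v

lemma refl6_bil (v : Fin 6 → ℚ) (hk : bilQ v v ≠ 0) (x z : Fin 6 → ℚ) :
    bilQ (refl6 v (bilQ v v) x) (refl6 v (bilQ v v) z) = bilQ x z := by
  unfold refl6
  rw [bilQ_sub_smul_right, bilQ_sub_smul_left, bilQ_sub_smul_left, bilQ_symm v z]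
  field_simp
  ring

lemma refl6_invol (v : Fin 6 → ℚ) (hk : bilQ v v ≠ 0) (x : Fin 6 → ℚ) :
    refl6 v (bilQ v v) (refl6 v (bilQ v v) x) = x := by
  have h1 : bilQ (refl6 v (bilQ v v) x) v = - bilQ x v := by
    unfold refl6
    rw [bilQ_sub_smul_left]
    field_simp
    ring
  unfold refl6 at h1 ⊢
  rw [h1]
  have h2 : (2 * -bilQ x v) / bilQ v v = -((2 * bilQ x v) / bilQ v v) := by ring
  rw [h2, neg_smul, sub_neg_eq_add, sub_add_cancel]

lemma refl6_add (v : Fin 6 → ℚ) (k : ℚ) (x x' : Fin 6 → ℚ) :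
    refl6 v k (x + x') = refl6 v k x + refl6 v k x' := by
  unfold refl6
  rw [bilQ_add_left]
  have h : (2 * (bilQ x v + bilQ x' v)) / k
      = (2 * bilQ x v) / k + (2 * bilQ x' v) / k := by ring
  rw [h, add_smul]
  abel

lemma refl6_smul (v : Fin 6 → ℚ) (k : ℚ) (a : ℚ) (x : Fin 6 → ℚ) :
    refl6 v k (a • x) = a • refl6 v k x := by
  unfold refl6
  rw [bilQ_smul_left]
  have h : (2 * (a * bilQ x v)) / k = a * ((2 * bilQ x v) / k) := by ring
  rw [h, smul_sub, smul_smul]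

/-- Coordinates on `yzero⊥`. -/
def Lmap (u : Fin 6 → ℚ) : Fin 5 → ℚ :=
  ![u 2, u 3, (u 4 + u 5) / 2, (u 4 - u 5) / 2, u 0]

def Mmap (Δ : ℚ) (w : Fin 5 → ℚ) : Fin 6 → ℚ :=
  ![w 4, Δ * w 4, w 0, w 1, w 2 + w 3, w 2 - w 3]

lemma Lmap_Mmap (Δ : ℚ) (w : Fin 5 → ℚ) : Lmap (Mmap Δ w) = w := by
  funext i
  fin_cases i
  · rfl
  · rfl
  · show (w 2 + w 3 + (w 2 - w 3)) / 2 = w 2; ring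
  · show (w 2 + w 3 - (w 2 - w 3)) / 2 = w 3; ring
  · rfl

lemma Mmap_Lmap (Δ : ℚ) (u : Fin 6 → ℚ) (hu : bilQ u (yzero Δ) = 0) :
    Mmap Δ (Lmap u) = u := by
  have h1 : u 1 = Δ * u 0 := by
    rw [bilQ_expand] at hu
    simp only [yzero, v6_0, v6_1, v6_2, v6_3, v6_4, v6_5] at hu
    linarith
  funext i
  fin_cases i
  · rfl
  · show Δ * u 0 = u 1; rw [h1]
  · rfl
  · rfl
  · show (u 4 + u 5) / 2 + (u 4 - u 5) / 2 = u 4; ring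
  · show (u 4 + u 5) / 2 - (u 4 - u 5) / 2 = u 5; ring

lemma Mmap_perp (Δ : ℚ) (w : Fin 5 → ℚ) : bilQ (Mmap Δ w) (yzero Δ) = 0 := by
  rw [bilQ_expand]
  simp only [Mmap, yzero, v6_0, v6_1, v6_2, v6_3, v6_4, v6_5]
  ring

lemma Lmap_add (u u' : Fin 6 → ℚ) : Lmap (u + u') = Lmap u + Lmap u' := by
  funext i
  fin_cases i
  · rfl
  · rfl
  · show (u 4 + u' 4 + (u 5 + u' 5)) / 2 = (u 4 + u 5) / 2 + (u' 4 + u' 5) / 2; ring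
  · show (u 4 + u' 4 - (u 5 + u' 5)) / 2 = (u 4 - u 5) / 2 + (u' 4 - u' 5) / 2; ring
  · rfl

lemma Lmap_smul (a : ℚ) (u : Fin 6 → ℚ) : Lmap (a • u) = a • Lmap u := by
  funext i
  fin_cases i
  · rfl
  · rfl
  · show (a * u 4 + a * u 5) / 2 = a * ((u 4 + u 5) / 2); ring
  · show (a * u 4 - a * u 5) / 2 = a * ((u 4 - u 5) / 2); ring
  · rfl

lemma yzero_norm (Δ : ℚ) : bilQ (yzero Δ) (yzero Δ) = -2 * Δ := by
  rw [bilQ_expand]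
  simp only [yzero, v6_0, v6_1, v6_2, v6_3, v6_4, v6_5]
  ring

lemma quad_eq (Δ : ℚ) (u : Fin 6 → ℚ) (hu : bilQ u (yzero Δ) = 0) :
    bilQ u u = (Lmap u) ⬝ᵥ (G5 Δ).mulVec (Lmap u) := by
  have h1 : u 1 = Δ * u 0 := by
    rw [bilQ_expand] at hu
    simp only [yzero, v6_0, v6_1, v6_2, v6_3, v6_4, v6_5] at hu
    linarith
  rw [bilQ_expand, G5_expand]
  simp only [Lmap, v5_0, v5_1, v5_2, v5_3, v5_4]
  rw [h1]
  ring

/-- The main construction, parametrized by a sign `ε` with nondegenerate `y - ε • yzero Δ`. -/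
lemma construct (Δ : ℚ) (hΔ : Δ ≠ 0) (y : Fin 6 → ℚ) (hyy : bilQ y y = -2 * Δ)
    (ε : ℚ) (hε : ε * ε = 1)
    (hk : bilQ (y - ε • yzero Δ) (y - ε • yzero Δ) ≠ 0) :
    ∃ e : ↥(perpQ y) ≃ₗ[ℚ] (Fin 5 → ℚ),
      ∀ w : ↥(perpQ y),
        bilQ (w : Fin 6 → ℚ) (w : Fin 6 → ℚ) = (e w) ⬝ᵥ (G5 Δ).mulVec (e w) := by
  have hεne : ε ≠ 0 := by
    intro h; rw [h] at hε; norm_num at hε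
  set v : Fin 6 → ℚ := y - ε • yzero Δ with hv
  set k : ℚ := bilQ v v with hkdef
  set r : (Fin 6 → ℚ) → (Fin 6 → ℚ) := refl6 v k with hr
  -- `2⟨y,v⟩ = k`, hence `r y = ε • yzero Δ`
  have hByv : 2 * bilQ y v = k := by
    have e1 : bilQ y v = bilQ y y - ε * bilQ y (yzero Δ) := bilQ_sub_smul_right _ _ _ _
    have e2 : bilQ (yzero Δ) v = bilQ (yzero Δ) y - ε * bilQ (yzero Δ) (yzero Δ) :=
      bilQ_sub_smul_right _ _ _ _
    have e3 : k = bilQ y v - ε * bilQ (yzero Δ) v := bilQ_sub_smul_left _ _ _ _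
    rw [e3, e1, e2, bilQ_symm (yzero Δ) y, yzero_norm, hyy]
    linear_combination 2 * Δ * hε
  have hry : r y = ε • yzero Δ := by
    rw [hr, refl6, hByv, div_self hk, one_smul, hv]
    abel
  have hrεy : r (ε • yzero Δ) = y := by
    rw [← hry, hr, hkdef]
    exact refl6_invol v hk y
  -- `r` exchanges the two perps
  have hperp1 : ∀ x : Fin 6 → ℚ, bilQ x y = 0 → bilQ (r x) (yzero Δ) = 0 := by
    intro x hx
    have h1 : bilQ (r x) (r y) = bilQ x y := by rw [hr, hkdef]; exact refl6_bil v hk x y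
    rw [hry, bilQ_smul_right, hx] at h1
    exact (mul_eq_zero.mp h1).resolve_left hεne
  have hperp2 : ∀ u : Fin 6 → ℚ, bilQ u (yzero Δ) = 0 → bilQ (r u) y = 0 := by
    intro u hu
    have h1 : bilQ (r u) (r (ε • yzero Δ)) = bilQ u (ε • yzero Δ) := by
      rw [hr, hkdef]; exact refl6_bil v hk u (ε • yzero Δ)
    rw [hrεy, bilQ_smul_right, hu, mul_zero] at h1
    exact h1
  have hmem : ∀ w : Fin 5 → ℚ, r (Mmap Δ w) ∈ perpQ y := fun w =>
    hperp2 (Mmap Δ w) (Mmap_perp Δ w)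
  refine ⟨{ toFun := fun x => Lmap (r x.1)
            map_add' := ?_
            map_smul' := ?_
            invFun := fun w => ⟨r (Mmap Δ w), hmem w⟩
            left_inv := ?_
            right_inv := ?_ }, ?_⟩
  · intro x x'
    show Lmap (r (x.1 + x'.1)) = Lmap (r x.1) + Lmap (r x'.1)
    rw [hr, refl6_add, Lmap_add]
  · intro a x
    show Lmap (r (a • x.1)) = a • Lmap (r x.1)
    rw [hr, refl6_smul, Lmap_smul]
  · intro x
    apply Subtype.ext
    have hx : bilQ (r x.1) (yzero Δ) = 0 := hperp1 x.1 x.2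
    show r (Mmap Δ (Lmap (r x.1))) = x.1
    rw [Mmap_Lmap Δ _ hx, hr, hkdef]
    exact refl6_invol v hk x.1
  · intro w
    show Lmap (r (r (Mmap Δ w))) = w
    rw [hr, hkdef, refl6_invol v hk, Lmap_Mmap]
  · intro w
    show bilQ w.1 w.1 = (Lmap (r w.1)) ⬝ᵥ (G5 Δ).mulVec (Lmap (r w.1))
    have h1 : bilQ (r w.1) (r w.1) = bilQ w.1 w.1 := by
      rw [hr, hkdef]; exact refl6_bil v hk w.1 w.1
    rw [← h1]
    exact quad_eq Δ (r w.1) (hperp1 w.1 w.2)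

lemma main (Δ : ℚ) (hΔ : Δ ≠ 0) (y : Fin 6 → ℚ) (hyy : bilQ y y = -2 * Δ) :
    ∃ e : ↥(perpQ y) ≃ₗ[ℚ] (Fin 5 → ℚ),
      ∀ w : ↥(perpQ y),
        bilQ (w : Fin 6 → ℚ) (w : Fin 6 → ℚ) = (e w) ⬝ᵥ (G5 Δ).mulVec (e w) := by
  have hsum : bilQ (y - (1:ℚ) • yzero Δ) (y - (1:ℚ) • yzero Δ)
      + bilQ (y - (-1:ℚ) • yzero Δ) (y - (-1:ℚ) • yzero Δ)
      = 2 * bilQ y y + 2 * bilQ (yzero Δ) (yzero Δ) := by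
    simp only [bilQ_expand, Pi.sub_apply, Pi.smul_apply, smul_eq_mul]
    ring
  rw [hyy, yzero_norm] at hsum
  by_cases h1 : bilQ (y - (1:ℚ) • yzero Δ) (y - (1:ℚ) • yzero Δ) ≠ 0
  · exact construct Δ hΔ y hyy 1 (by norm_num) h1
  · push_neg at h1
    have h2 : bilQ (y - (-1:ℚ) • yzero Δ) (y - (-1:ℚ) • yzero Δ) ≠ 0 := by
      intro h
      rw [h1, h] at hsum
      apply hΔ
      linarith
    exact construct Δ hΔ y hyy (-1) (by norm_num) h2

theorem stmt10 (c : Fin 6 → ℤ) (hc : Finset.univ.gcd c = 1) (hΔ : 0 < Δval c) :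
    ∃ e : ↥(perpQ fun i => ((Yvec c i : ℤ) : ℚ)) ≃ₗ[ℚ] (Fin 5 → ℚ),
      ∀ w : ↥(perpQ fun i => ((Yvec c i : ℤ) : ℚ)),
        bilQ (w : Fin 6 → ℚ) (w : Fin 6 → ℚ) =
          (e w) ⬝ᵥ (G5 ((Δval c : ℤ) : ℚ)).mulVec (e w) := by
  apply main
  · exact_mod_cast (ne_of_gt hΔ)
  · rw [bilQ_expand]
    simp only [Yvec, v6_0, v6_1, v6_2, v6_3, v6_4, v6_5, Δval]
    push_cast
    ring
end

section
/- Let Δ be a positive integer and let Q be the quadratic form Q(x) = 2x₁² − 2x₂² − 2x₃² − 2x₄² + 2Δ·x₅² on ℚ⁵. Then the even Clifford algebra Cl⁺(Q) is isomorphic as a ℚ-algebra to the 2×2 matrix algebra M₂((−1, Δ)_ℚ) over the quaternion algebra (−1, Δ)_ℚ. -/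
set_option synthInstance.maxHeartbeats 1000000
set_option maxHeartbeats 1000000

open Quaternion TensorProduct

namespace Stmt17Aux

open CliffordAlgebra

/-! ### Abstract lemmas about anticommuting elements -/

section AntiComm

variable {A : Type*} [Ring A] {a b c d : A}

lemma swap2 (hca : c * a = -(a * c)) (hcb : c * b = -(b * c)) :
    c * (a * b) = a * (b * c) := by
  rw [← mul_assoc, hca, neg_mul, mul_assoc, hcb, mul_neg, neg_neg]

lemma aba (ha : a * a = 1) (hba : b * a = -(a * b)) : a * b * a = -b := by
  rw [mul_assoc, hba, mul_neg, ← mul_assoc, ha, one_mul]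

lemma core (ha : a * a = 1) (hb : b * b = 1) (hba : b * a = -(a * b))
    (hca : c * a = -(a * c)) (hcb : c * b = -(b * c)) :
    a * b * c * (a * b) = -c := by
  rw [mul_assoc (a * b) c (a * b), swap2 hca hcb, ← mul_assoc, aba ha hba, neg_mul,
    ← mul_assoc, hb, one_mul]

lemma tri_mul_tri (ha : a * a = 1) (hb : b * b = 1) (hba : b * a = -(a * b))
    (hca : c * a = -(a * c)) (hcb : c * b = -(b * c)) :
    -(a * b * c) * -(a * b * d) = -(c * d) := by
  rw [neg_mul_neg, show a * b * d = a * b * d from rfl, ← mul_assoc,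
    core ha hb hba hca hcb, neg_mul]

lemma tri_sq (ha : a * a = 1) (hb : b * b = 1) (hba : b * a = -(a * b))
    (hca : c * a = -(a * c)) (hcb : c * b = -(b * c)) :
    -(a * b * c) * -(a * b * c) = -(c * c) :=
  tri_mul_tri ha hb hba hca hcb

lemma tri_mul_ab (ha : a * a = 1) (hb : b * b = 1) (hba : b * a = -(a * b))
    (hca : c * a = -(a * c)) (hcb : c * b = -(b * c)) :
    -(a * b * c) * (a * b) = c := by
  rw [neg_mul, core ha hb hba hca hcb, neg_neg]

lemma tri_comm_left (ha : a * a = 1) (hba : b * a = -(a * b)) (hca : c * a = -(a * c)) :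
    Commute a (a * b * c) := by
  unfold Commute SemiconjBy
  rw [← mul_assoc, ← mul_assoc, ha, one_mul, mul_assoc (a * b) c a, hca, mul_neg,
    ← mul_assoc, aba ha hba, neg_mul, neg_neg]

lemma tri_comm_mid (hb : b * b = 1) (hba : b * a = -(a * b)) (hcb : c * b = -(b * c)) :
    Commute b (a * b * c) := by
  unfold Commute SemiconjBy
  have L : b * (a * b * c) = -(a * c) := by
    rw [← mul_assoc, ← mul_assoc, hba, neg_mul, neg_mul, mul_assoc a b b, hb, mul_one]
  have R : (a * b * c) * b = -(a * c) := by
    rw [mul_assoc (a * b) c b, hcb, mul_neg, ← mul_assoc, mul_assoc a b b, hb, mul_one]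
  rw [L, R]

end AntiComm

variable (δ : ℚ)

/-! ### The quadratic form and Clifford algebra generators -/

/-- The quadratic form `⟨2,-2,-2,-2,2δ⟩`. -/
abbrev Qf : QuadraticForm ℚ (Fin 5 → ℚ) :=
  QuadraticMap.weightedSumSquares ℚ ![(2 : ℚ), -2, -2, -2, 2 * δ]

abbrev dv : Fin 5 → ℚ := ![(2 : ℚ), -2, -2, -2, 2 * δ]

abbrev P (a : Fin 5) : Fin 5 → ℚ := Pi.single a 1

lemma Qf_single (a : Fin 5) : Qf δ (P a) = dv δ a := by
  rw [QuadraticMap.weightedSumSquares_apply]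
  rw [show (∑ i, (![(2 : ℚ), -2, -2, -2, 2 * δ]) i • (P a i * P a i)) =
      ∑ i, (if a = i then dv δ i else 0) from Finset.sum_congr rfl fun i _ => by
        by_cases h : a = i <;> simp [P, Pi.single_apply, h, dv]]
  simp

lemma Qf_ortho {a b : Fin 5} (h : a ≠ b) : (Qf δ).IsOrtho (P a) (P b) := by
  rw [QuadraticMap.isOrtho_def]
  rw [QuadraticMap.weightedSumSquares_apply, QuadraticMap.weightedSumSquares_apply,
    QuadraticMap.weightedSumSquares_apply, ← Finset.sum_add_distrib]
  refine Finset.sum_congr rfl fun i _ => ?_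
  by_cases ha : a = i <;> by_cases hb : b = i
  · exact absurd (ha ▸ hb.symm) h
  all_goals simp [P, Pi.single_apply, ha, hb] <;> ring_nf

abbrev σ (a : Fin 5) : CliffordAlgebra (Qf δ) := ι (Qf δ) (P a)

lemma σ_sq (a : Fin 5) : σ δ a * σ δ a = algebraMap ℚ _ (dv δ a) := by
  rw [show σ δ a = ι (Qf δ) (P a) from rfl, ι_sq_scalar, Qf_single]

lemma σ_swap {a b : Fin 5} (h : a ≠ b) : σ δ b * σ δ a = -(σ δ a * σ δ b) :=
  eq_neg_of_add_eq_zero_right (ι_mul_ι_add_swap_of_isOrtho (Qf_ortho δ h))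

lemma uu (a b : Fin 5) (ha : a ≠ 0) :
    (σ δ 0 * σ δ a) * (σ δ 0 * σ δ b) = -((2 : ℚ) • (σ δ a * σ δ b)) := by
  have h1 : σ δ a * (σ δ 0 * σ δ b) = -(σ δ 0 * (σ δ a * σ δ b)) := by
    rw [← mul_assoc, σ_swap δ (Ne.symm ha), neg_mul, mul_assoc]
  rw [mul_assoc, h1, mul_neg, ← mul_assoc, σ_sq δ 0, Algebra.smul_def]
  norm_num

/-! ### Generators of the even subalgebra -/

noncomputable def X (a : Fin 5) : even (Qf δ) :=
  (1/2 : ℚ) • (even.ι (Qf δ)).bilin (P 0) (P a)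

lemma X_coe (a : Fin 5) : (X δ a : CliffordAlgebra (Qf δ)) = (1/2 : ℚ) • (σ δ 0 * σ δ a) := rfl

lemma bilin_coe (x y : Fin 5 → ℚ) :
    ((even.ι (Qf δ)).bilin x y : CliffordAlgebra (Qf δ)) = ι _ x * ι _ y := rfl

noncomputable def YE (a : Fin 5) : even (Qf δ) :=
  if a = 0 then (2:ℚ) • (1 : even (Qf δ)) else -((2:ℚ) • X δ a)

lemma bilin_single (a b : Fin 5) :
    (even.ι (Qf δ)).bilin (P a) (P b) = YE δ a * X δ b := by
  by_cases ha : a = 0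
  · subst ha
    refine Subtype.ext ?_
    rw [YE, if_pos rfl, MulMemClass.coe_mul, SetLike.val_smul, OneMemClass.coe_one, X_coe,
      bilin_coe, smul_mul_assoc, one_mul, smul_smul]
    norm_num
  · refine Subtype.ext ?_
    rw [YE, if_neg ha, MulMemClass.coe_mul, NegMemClass.coe_neg, SetLike.val_smul,
      X_coe, X_coe, bilin_coe, smul_smul]
    norm_num
    rw [uu δ a b ha, smul_neg, neg_neg, smul_smul]
    norm_num

lemma X_zero : X δ 0 = 1 := by
  refine Subtype.ext ?_
  rw [X_coe, OneMemClass.coe_one, σ_sq, show dv δ 0 = (2:ℚ) from rfl, Algebra.smul_def,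
    ← map_mul]
  norm_num

lemma X_mul_X_coe {a : Fin 5} (b : Fin 5) (ha : a ≠ 0) :
    ((X δ a * X δ b : even (Qf δ)) : CliffordAlgebra (Qf δ))
      = -((1/2 : ℚ) • (σ δ a * σ δ b)) := by
  rw [MulMemClass.coe_mul, X_coe, X_coe, smul_mul_assoc, mul_smul_comm, smul_smul,
    uu δ a b ha, smul_neg, smul_smul]
  norm_num

lemma X_anticomm {a b : Fin 5} (ha : a ≠ 0) (hb : b ≠ 0) (hab : a ≠ b) :
    X δ b * X δ a = -(X δ a * X δ b) := by
  refine Subtype.ext ?_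
  rw [NegMemClass.coe_neg, X_mul_X_coe δ a hb, X_mul_X_coe δ b ha, σ_swap δ hab,
    smul_neg, neg_neg]

lemma X_sq {a : Fin 5} (ha : a ≠ 0) : X δ a * X δ a = (-(dv δ a)/2 : ℚ) • 1 := by
  refine Subtype.ext ?_
  rw [SetLike.val_smul, OneMemClass.coe_one, X_mul_X_coe δ a ha, σ_sq, Algebra.smul_def,
    ← map_mul, ← map_neg, Algebra.algebraMap_eq_smul_one]
  congr 1
  ring

lemma X_sq1 : X δ 1 * X δ 1 = (1:ℚ) • 1 := by
  rw [X_sq δ (by decide), show dv δ 1 = (-2:ℚ) from rfl]; norm_num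
lemma X_sq2 : X δ 2 * X δ 2 = (1:ℚ) • 1 := by
  rw [X_sq δ (by decide), show dv δ 2 = (-2:ℚ) from rfl]; norm_num
lemma X_sq3 : X δ 3 * X δ 3 = 1 := by
  rw [X_sq δ (by decide), show dv δ 3 = (-2:ℚ) from rfl]; norm_num
lemma X_sq4 : X δ 4 * X δ 4 = -δ • (1 : even (Qf δ)) := by
  rw [X_sq δ (by decide), show dv δ 4 = 2*δ from rfl, show (-(2*δ)/2 : ℚ) = -δ by ring]

lemma X_sq3' : X δ 3 * X δ 3 = (1:ℚ) • (1 : even (Qf δ)) := by rw [X_sq3]; rw [one_smul]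

lemma X_ac21 : X δ 2 * X δ 1 = -(X δ 1 * X δ 2) := X_anticomm δ (by decide) (by decide) (by decide)
lemma X_ac31 : X δ 3 * X δ 1 = -(X δ 1 * X δ 3) := X_anticomm δ (by decide) (by decide) (by decide)
lemma X_ac32 : X δ 3 * X δ 2 = -(X δ 2 * X δ 3) := X_anticomm δ (by decide) (by decide) (by decide)
lemma X_ac41 : X δ 4 * X δ 1 = -(X δ 1 * X δ 4) := X_anticomm δ (by decide) (by decide) (by decide)
lemma X_ac42 : X δ 4 * X δ 2 = -(X δ 2 * X δ 4) := X_anticomm δ (by decide) (by decide) (by decide)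
lemma X_ac43 : X δ 4 * X δ 3 = -(X δ 3 * X δ 4) := X_anticomm δ (by decide) (by decide) (by decide)

/-- the image of `i`. -/
noncomputable def Iel : even (Qf δ) := -(X δ 1 * X δ 2 * X δ 3)
/-- the image of `j`. -/
noncomputable def Jel : even (Qf δ) := -(X δ 1 * X δ 2 * X δ 4)

lemma X_sq1' : X δ 1 * X δ 1 = 1 := by rw [X_sq1, one_smul]
lemma X_sq2' : X δ 2 * X δ 2 = 1 := by rw [X_sq2, one_smul]

lemma Iel_sq : Iel δ * Iel δ = (-1 : ℚ) • 1 := by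
  rw [Iel, tri_sq (X_sq1' δ) (X_sq2' δ) (X_ac21 δ) (X_ac31 δ) (X_ac32 δ), X_sq3]
  simp

lemma Jel_sq : Jel δ * Jel δ = δ • (1 : even (Qf δ)) := by
  rw [Jel, tri_sq (X_sq1' δ) (X_sq2' δ) (X_ac21 δ) (X_ac41 δ) (X_ac42 δ), X_sq4]
  simp

lemma Iel_mul_Jel : Iel δ * Jel δ = -(X δ 3 * X δ 4) := by
  rw [Iel, Jel, tri_mul_tri (X_sq1' δ) (X_sq2' δ) (X_ac21 δ) (X_ac31 δ) (X_ac32 δ)]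

lemma Jel_mul_Iel : Jel δ * Iel δ = -(Iel δ * Jel δ) := by
  rw [Iel, Jel, tri_mul_tri (X_sq1' δ) (X_sq2' δ) (X_ac21 δ) (X_ac41 δ) (X_ac42 δ),
    tri_mul_tri (X_sq1' δ) (X_sq2' δ) (X_ac21 δ) (X_ac31 δ) (X_ac32 δ), X_ac43, neg_neg]

lemma Iel_mul_X12 : Iel δ * (X δ 1 * X δ 2) = X δ 3 :=
  tri_mul_ab (X_sq1' δ) (X_sq2' δ) (X_ac21 δ) (X_ac31 δ) (X_ac32 δ)

lemma Jel_mul_X12 : Jel δ * (X δ 1 * X δ 2) = X δ 4 :=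
  tri_mul_ab (X_sq1' δ) (X_sq2' δ) (X_ac21 δ) (X_ac41 δ) (X_ac42 δ)

lemma comm_X1_Iel : Commute (X δ 1) (Iel δ) :=
  (tri_comm_left (X_sq1' δ) (X_ac21 δ) (X_ac31 δ)).neg_right
lemma comm_X2_Iel : Commute (X δ 2) (Iel δ) :=
  (tri_comm_mid (X_sq2' δ) (X_ac21 δ) (X_ac32 δ)).neg_right
lemma comm_X1_Jel : Commute (X δ 1) (Jel δ) :=
  (tri_comm_left (X_sq1' δ) (X_ac21 δ) (X_ac41 δ)).neg_right
lemma comm_X2_Jel : Commute (X δ 2) (Jel δ) :=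
  (tri_comm_mid (X_sq2' δ) (X_ac21 δ) (X_ac42 δ)).neg_right

/-! ### The matrix side -/

noncomputable abbrev iH : ℍ[ℚ,-1,δ] := ⟨0,1,0,0⟩
noncomputable abbrev jH : ℍ[ℚ,-1,δ] := ⟨0,0,1,0⟩

abbrev M2H := Matrix (Fin 2) (Fin 2) ℍ[ℚ,-1,δ]

noncomputable def V : Fin 5 → M2H δ :=
  ![1, !![1,0;0,-1], !![0,1;1,0], !![0, iH δ; -iH δ, 0], !![0, jH δ; -jH δ, 0]]

noncomputable def hmap : (Fin 5 → ℚ) →ₗ[ℚ] M2H δ :=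
  ∑ a : Fin 5, (LinearMap.proj a).smulRight (V δ a)

noncomputable def gmap : (Fin 5 → ℚ) →ₗ[ℚ] M2H δ :=
  (LinearMap.proj (0 : Fin 5)).smulRight ((4:ℚ) • (1 : M2H δ)) - (2:ℚ) • hmap δ

lemma hmap_apply (m : Fin 5 → ℚ) :
    hmap δ m = !![⟨m 0 + m 1, 0, 0, 0⟩, ⟨m 2, m 3, m 4, 0⟩;
                  ⟨m 2, -m 3, -m 4, 0⟩, ⟨m 0 - m 1, 0, 0, 0⟩] := by
  refine Matrix.ext fun i j => ?_
  rw [hmap]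
  simp only [LinearMap.sum_apply, LinearMap.smulRight_apply, LinearMap.proj_apply,
    Fin.sum_univ_five]
  fin_cases i <;> fin_cases j <;>
    simp [V] <;> ext <;> simp [QuaternionAlgebra.smul_mk] <;> ring

lemma gmap_apply (m : Fin 5 → ℚ) :
    gmap δ m = !![⟨2*m 0 - 2*m 1, 0, 0, 0⟩, ⟨-2*m 2, -2*m 3, -2*m 4, 0⟩;
                  ⟨-2*m 2, 2*m 3, 2*m 4, 0⟩, ⟨2*m 0 + 2*m 1, 0, 0, 0⟩] := by
  refine Matrix.ext fun i j => ?_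
  rw [gmap]
  simp only [LinearMap.sub_apply, LinearMap.smul_apply, LinearMap.smulRight_apply,
    LinearMap.proj_apply, hmap_apply]
  fin_cases i <;> fin_cases j <;>
    simp <;> ext <;> simp <;> ring

lemma hg (m : Fin 5 → ℚ) : hmap δ m * gmap δ m = algebraMap ℚ _ (Qf δ m) := by
  rw [hmap_apply, gmap_apply, QuadraticMap.weightedSumSquares_apply]
  refine Matrix.ext fun i j => ?_
  rw [Fin.sum_univ_five]
  fin_cases i <;> fin_cases j <;>
    simp [Matrix.mul_apply, Fin.sum_univ_two, Matrix.algebraMap_matrix_apply,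
      Algebra.algebraMap_eq_smul_one] <;>
    ext <;> simp <;> ring

lemma gh (m : Fin 5 → ℚ) : gmap δ m * hmap δ m = algebraMap ℚ _ (Qf δ m) := by
  rw [hmap_apply, gmap_apply, QuadraticMap.weightedSumSquares_apply]
  refine Matrix.ext fun i j => ?_
  rw [Fin.sum_univ_five]
  fin_cases i <;> fin_cases j <;>
    simp [Matrix.mul_apply, Fin.sum_univ_two, Matrix.algebraMap_matrix_apply,
      Algebra.algebraMap_eq_smul_one] <;>
    ext <;> simp <;> ring

lemma mat_i : -(V δ 1 * V δ 2 * V δ 3) = iH δ • 1 := by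
  refine Matrix.ext fun i j => ?_
  fin_cases i <;> fin_cases j <;>
    simp [V, Matrix.mul_apply, Fin.sum_univ_two] <;> ext <;> simp

lemma mat_j : -(V δ 1 * V δ 2 * V δ 4) = jH δ • 1 := by
  refine Matrix.ext fun i j => ?_
  fin_cases i <;> fin_cases j <;>
    simp [V, Matrix.mul_apply, Fin.sum_univ_two] <;> ext <;> simp

/-! ### The algebra map `φ : even (Qf δ) →ₐ[ℚ] M2H δ` -/

open CliffordAlgebra in
noncomputable def fHom : EvenHom (Qf δ) (M2H δ) where
  bilin := LinearMap.mk₂ ℚ (fun x y => gmap δ x * hmap δ y)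
    (fun x x' y => by rw [map_add, add_mul])
    (fun r x y => by rw [map_smul, smul_mul_assoc])
    (fun x y y' => by rw [map_add, mul_add])
    (fun r x y => by rw [map_smul, mul_smul_comm])
  contract m := by rw [LinearMap.mk₂_apply, gh]
  contract_mid m₁ m₂ m₃ := by
    rw [LinearMap.mk₂_apply, LinearMap.mk₂_apply, LinearMap.mk₂_apply, mul_assoc,
      ← mul_assoc (hmap δ m₂), hg, Algebra.smul_def, ← mul_assoc, ← Algebra.commutes,
      mul_assoc, ← Algebra.smul_def]

noncomputable def φ : even (Qf δ) →ₐ[ℚ] M2H δ := even.lift (Qf δ) (fHom δ)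

lemma φ_bilin (x y : Fin 5 → ℚ) :
    φ δ ((even.ι (Qf δ)).bilin x y) = gmap δ x * hmap δ y :=
  even.lift_ι (Qf δ) (fHom δ) x y

lemma gP (a : Fin 5) :
    gmap δ (P a) = if a = 0 then (2:ℚ) • 1 else -((2:ℚ) • V δ a) := by
  fin_cases a <;>
    · rw [gmap_apply]
      refine Matrix.ext fun i j => ?_
      fin_cases i <;> fin_cases j <;>
        simp [P, V, Pi.single_apply] <;> ext <;> simp

lemma hP (a : Fin 5) : hmap δ (P a) = V δ a := by
  fin_cases a <;>
    · rw [hmap_apply]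
      refine Matrix.ext fun i j => ?_
      fin_cases i <;> fin_cases j <;>
        simp [P, V, Pi.single_apply] <;> ext <;> simp

lemma φ_X (a : Fin 5) : φ δ (X δ a) = V δ a := by
  rw [X, map_smul, φ_bilin, gP, hP, if_pos rfl, smul_mul_assoc, one_mul, smul_smul]
  norm_num

/-! ### `ℍ[ℚ,1,1] ≃ₐ M₂(ℚ)` -/

noncomputable def bM : QuaternionAlgebra.Basis (Matrix (Fin 2) (Fin 2) ℚ) (1:ℚ) 0 (1:ℚ) where
  i := !![1,0;0,-1]
  j := !![0,1;1,0]
  k := !![0,1;-1,0]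
  i_mul_i := by
    refine Matrix.ext fun i j => ?_
    fin_cases i <;> fin_cases j <;> simp [Matrix.mul_apply, Fin.sum_univ_two]
  j_mul_j := by
    refine Matrix.ext fun i j => ?_
    fin_cases i <;> fin_cases j <;> simp [Matrix.mul_apply, Fin.sum_univ_two]
  i_mul_j := by
    refine Matrix.ext fun i j => ?_
    fin_cases i <;> fin_cases j <;> simp [Matrix.mul_apply, Fin.sum_univ_two]
  j_mul_i := by
    refine Matrix.ext fun i j => ?_
    fin_cases i <;> fin_cases j <;> simp [Matrix.mul_apply, Fin.sum_univ_two]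

noncomputable def e : ℍ[ℚ,1,1] →ₐ[ℚ] Matrix (Fin 2) (Fin 2) ℚ := bM.liftHom

lemma e_mk (p q r s : ℚ) : e ⟨p,q,r,s⟩ = !![p+q, r+s; r-s, p-q] := by
  show bM.lift _ = _
  rw [QuaternionAlgebra.Basis.lift]
  refine Matrix.ext fun i j => ?_
  fin_cases i <;> fin_cases j <;>
    simp [bM, Matrix.algebraMap_matrix_apply] <;> ring

lemma esurj : Function.Surjective e := by
  intro M
  refine ⟨⟨(M 0 0 + M 1 1)/2, (M 0 0 - M 1 1)/2, (M 0 1 + M 1 0)/2, (M 0 1 - M 1 0)/2⟩, ?_⟩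
  rw [e_mk]
  refine Matrix.ext fun i j => ?_
  fin_cases i <;> fin_cases j <;> simp <;> ring

lemma einj : Function.Injective e := by
  have h : Module.finrank ℚ ℍ[ℚ,1,1] = Module.finrank ℚ (Matrix (Fin 2) (Fin 2) ℚ) := by
    rw [QuaternionAlgebra.finrank_eq_four, Module.finrank_matrix]
    simp
  have h2 : Function.Surjective e.toLinearMap := esurj
  exact (LinearMap.injective_iff_surjective_of_finrank_eq_finrank h).2 h2

noncomputable def eqM : ℍ[ℚ,1,1] ≃ₐ[ℚ] Matrix (Fin 2) (Fin 2) ℚ :=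
  AlgEquiv.ofBijective e ⟨einj, esurj⟩

/-! ### The inverse map ψ -/

noncomputable def bE : QuaternionAlgebra.Basis (even (Qf δ)) (1:ℚ) 0 (1:ℚ) where
  i := X δ 1
  j := X δ 2
  k := X δ 1 * X δ 2
  i_mul_i := by rw [X_sq1, zero_smul, add_zero]
  j_mul_j := X_sq2 δ
  i_mul_j := rfl
  j_mul_i := by rw [X_ac21, zero_smul, zero_sub]

noncomputable def bH : QuaternionAlgebra.Basis (even (Qf δ)) (-1) 0 δ where
  i := Iel δ
  j := Jel δ
  k := Iel δ * Jel δ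
  i_mul_i := by rw [Iel_sq, zero_smul, add_zero]
  j_mul_j := Jel_sq δ
  i_mul_j := rfl
  j_mul_i := by rw [Jel_mul_Iel, zero_smul, zero_sub]

noncomputable def ψH : ℍ[ℚ,-1,δ] →ₐ[ℚ] even (Qf δ) := (bH δ).liftHom

noncomputable def ψM : Matrix (Fin 2) (Fin 2) ℚ →ₐ[ℚ] even (Qf δ) :=
  ((bE δ).liftHom).comp eqM.symm.toAlgHom

lemma commute_bE_lift {z : even (Qf δ)} (h1 : Commute z (X δ 1)) (h2 : Commute z (X δ 2))
    (y : ℍ[ℚ,1,1]) : Commute z ((bE δ).liftHom y) := by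
  rw [QuaternionAlgebra.Basis.liftHom_apply, QuaternionAlgebra.Basis.lift]
  refine Commute.add_right (Commute.add_right (Commute.add_right ?_ ?_) ?_) ?_
  · exact (Algebra.commutes _ _).symm
  · exact (h1.smul_right _)
  · exact (h2.smul_right _)
  · exact ((h1.mul_right h2).smul_right _)

lemma hcomm : ∀ (p : ℍ[ℚ,-1,δ]) (q : Matrix (Fin 2) (Fin 2) ℚ),
    Commute (ψH δ p) (ψM δ q) := by
  intro p q
  have hI1 : Commute (Iel δ) (X δ 1) := (comm_X1_Iel δ).symm
  have hI2 : Commute (Iel δ) (X δ 2) := (comm_X2_Iel δ).symm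
  have hJ1 : Commute (Jel δ) (X δ 1) := (comm_X1_Jel δ).symm
  have hJ2 : Commute (Jel δ) (X δ 2) := (comm_X2_Jel δ).symm
  have key : ∀ z : even (Qf δ), Commute z (X δ 1) → Commute z (X δ 2) →
      Commute z (ψM δ q) := fun z a b => commute_bE_lift δ a b _
  show Commute ((bH δ).liftHom p) (ψM δ q)
  rw [QuaternionAlgebra.Basis.liftHom_apply, QuaternionAlgebra.Basis.lift]
  refine Commute.add_left (Commute.add_left (Commute.add_left ?_ ?_) ?_) ?_
  · exact Commute.symm ((Algebra.commutes _ _).symm)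
  · exact ((key _ hI1 hI2).smul_left _)
  · exact ((key _ hJ1 hJ2).smul_left _)
  · exact (key _ (hI1.mul_left hJ1) (hI2.mul_left hJ2)).smul_left _

noncomputable def ψ0 : (ℍ[ℚ,-1,δ] ⊗[ℚ] Matrix (Fin 2) (Fin 2) ℚ) →ₐ[ℚ] even (Qf δ) :=
  Algebra.TensorProduct.lift (ψH δ) (ψM δ) (hcomm δ)

noncomputable def E0 : M2H δ ≃ₐ[ℚ] (ℍ[ℚ,-1,δ] ⊗[ℚ] Matrix (Fin 2) (Fin 2) ℚ) :=
  matrixEquivTensor (Fin 2) ℚ ℍ[ℚ,-1,δ]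

noncomputable def ψ : M2H δ →ₐ[ℚ] even (Qf δ) := (ψ0 δ).comp (E0 δ).toAlgHom

/-! ### Computation of ψ on generators -/

lemma E0_symm_tmul (p : ℍ[ℚ,-1,δ]) (q : Matrix (Fin 2) (Fin 2) ℚ) :
    (E0 δ).symm (p ⊗ₜ[ℚ] q) = p • q.map (algebraMap ℚ ℍ[ℚ,-1,δ]) := rfl

lemma ψ_tmul (p : ℍ[ℚ,-1,δ]) (q : Matrix (Fin 2) (Fin 2) ℚ) :
    ψ δ (p • q.map (algebraMap ℚ ℍ[ℚ,-1,δ])) = ψH δ p * ψM δ q := by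
  rw [← E0_symm_tmul]
  show ψ0 δ ((E0 δ) ((E0 δ).symm _)) = _
  rw [AlgEquiv.apply_symm_apply]
  exact Algebra.TensorProduct.lift_tmul _ _ _ _ _

lemma e_i : e ⟨0,1,0,0⟩ = !![1,0;0,-1] := by
  rw [e_mk]
  norm_num

lemma e_j : e ⟨0,0,1,0⟩ = !![0,1;1,0] := by
  rw [e_mk]
  norm_num

lemma e_k : e ⟨0,0,0,1⟩ = !![0,1;-1,0] := by
  rw [e_mk]
  norm_num

lemma eqM_symm_i : eqM.symm !![1,0;0,-1] = (⟨0,1,0,0⟩ : ℍ[ℚ,1,1]) := by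
  rw [AlgEquiv.symm_apply_eq]
  exact (e_i).symm

lemma eqM_symm_j : eqM.symm !![0,1;1,0] = (⟨0,0,1,0⟩ : ℍ[ℚ,1,1]) := by
  rw [AlgEquiv.symm_apply_eq]
  exact (e_j).symm

lemma eqM_symm_k : eqM.symm !![0,1;-1,0] = (⟨0,0,0,1⟩ : ℍ[ℚ,1,1]) := by
  rw [AlgEquiv.symm_apply_eq]
  exact (e_k).symm

lemma bE_lift_i : (bE δ).liftHom (⟨0,0,0,0⟩ + ⟨0,1,0,0⟩ : ℍ[ℚ,1,1]) = X δ 1 := by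
  rw [QuaternionAlgebra.Basis.liftHom_apply, QuaternionAlgebra.Basis.lift]
  simp [bE]

lemma ψM_i : ψM δ !![1,0;0,-1] = X δ 1 := by
  rw [ψM, AlgHom.comp_apply, AlgEquiv.coe_toAlgHom, eqM_symm_i,
    QuaternionAlgebra.Basis.liftHom_apply, QuaternionAlgebra.Basis.lift]
  simp [bE]

lemma ψM_j : ψM δ !![0,1;1,0] = X δ 2 := by
  rw [ψM, AlgHom.comp_apply, AlgEquiv.coe_toAlgHom, eqM_symm_j,
    QuaternionAlgebra.Basis.liftHom_apply, QuaternionAlgebra.Basis.lift]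
  simp [bE]

lemma ψM_k : ψM δ !![0,1;-1,0] = X δ 1 * X δ 2 := by
  rw [ψM, AlgHom.comp_apply, AlgEquiv.coe_toAlgHom, eqM_symm_k,
    QuaternionAlgebra.Basis.liftHom_apply, QuaternionAlgebra.Basis.lift]
  simp [bE]

lemma ψH_i : ψH δ (iH δ) = Iel δ := by
  rw [ψH, QuaternionAlgebra.Basis.liftHom_apply, QuaternionAlgebra.Basis.lift]
  simp [bH]

lemma ψH_j : ψH δ (jH δ) = Jel δ := by
  rw [ψH, QuaternionAlgebra.Basis.liftHom_apply, QuaternionAlgebra.Basis.lift]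
  simp [bH]

lemma V1_eq : V δ 1 = (1 : ℍ[ℚ,-1,δ]) •
    (!![1,0;0,-1] : Matrix (Fin 2) (Fin 2) ℚ).map (algebraMap ℚ ℍ[ℚ,-1,δ]) := by
  refine Matrix.ext fun i j => ?_
  fin_cases i <;> fin_cases j <;> simp [V] <;> ext <;> simp

lemma V2_eq : V δ 2 = (1 : ℍ[ℚ,-1,δ]) •
    (!![0,1;1,0] : Matrix (Fin 2) (Fin 2) ℚ).map (algebraMap ℚ ℍ[ℚ,-1,δ]) := by
  refine Matrix.ext fun i j => ?_
  fin_cases i <;> fin_cases j <;> simp [V] <;> ext <;> simp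

lemma V3_eq : V δ 3 = (iH δ) •
    (!![0,1;-1,0] : Matrix (Fin 2) (Fin 2) ℚ).map (algebraMap ℚ ℍ[ℚ,-1,δ]) := by
  refine Matrix.ext fun i j => ?_
  fin_cases i <;> fin_cases j <;> simp [V] <;> ext <;> simp

lemma V4_eq : V δ 4 = (jH δ) •
    (!![0,1;-1,0] : Matrix (Fin 2) (Fin 2) ℚ).map (algebraMap ℚ ℍ[ℚ,-1,δ]) := by
  refine Matrix.ext fun i j => ?_
  fin_cases i <;> fin_cases j <;> simp [V] <;> ext <;> simp

lemma ψ_V (a : Fin 5) : ψ δ (V δ a) = X δ a := by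
  fin_cases a
  · show ψ δ (V δ 0) = X δ 0
    rw [show V δ 0 = 1 from rfl, map_one, X_zero]
  · show ψ δ (V δ 1) = X δ 1
    rw [V1_eq, ψ_tmul, map_one, one_mul, ψM_i]
  · show ψ δ (V δ 2) = X δ 2
    rw [V2_eq, ψ_tmul, map_one, one_mul, ψM_j]
  · show ψ δ (V δ 3) = X δ 3
    rw [V3_eq, ψ_tmul, ψH_i, ψM_k, Iel_mul_X12]
  · show ψ δ (V δ 4) = X δ 4
    rw [V4_eq, ψ_tmul, ψH_j, ψM_k, Jel_mul_X12]

lemma ψ0_tmul (p : ℍ[ℚ,-1,δ]) (q : Matrix (Fin 2) (Fin 2) ℚ) :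
    ψ0 δ (p ⊗ₜ[ℚ] q) = ψH δ p * ψM δ q :=
  Algebra.TensorProduct.lift_tmul _ _ _ _ _

/-! ### The compositions are the identity -/

open CliffordAlgebra in
lemma psi_phi : (ψ δ).comp (φ δ) = AlgHom.id ℚ (even (Qf δ)) := by
  apply even.algHom_ext
  refine EvenHom.ext ?_
  refine (Pi.basisFun ℚ (Fin 5)).ext fun a => ?_
  refine (Pi.basisFun ℚ (Fin 5)).ext fun b => ?_
  have hbasis : ∀ c : Fin 5, (Pi.basisFun ℚ (Fin 5)) c = P c := fun c => by
    ext x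
    simp [Pi.basisFun_apply, Pi.single_apply, Function.update,
      eq_comm]
  rw [hbasis, hbasis]
  show ψ δ (φ δ ((even.ι (Qf δ)).bilin (P a) (P b)))
      = (even.ι (Qf δ)).bilin (P a) (P b)
  rw [φ_bilin, map_mul, gP, hP, bilin_single, YE]
  by_cases ha : a = 0
  · rw [if_pos ha, if_pos ha, map_smul, map_one, ψ_V]
  · rw [if_neg ha, if_neg ha, map_neg, map_smul, ψ_V, ψ_V, neg_mul, smul_mul_assoc]

lemma φ_Iel : φ δ (Iel δ) = iH δ • 1 := by
  rw [Iel, map_neg, map_mul, map_mul, φ_X, φ_X, φ_X, ← mat_i]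

lemma φ_Jel : φ δ (Jel δ) = jH δ • 1 := by
  rw [Jel, map_neg, map_mul, map_mul, φ_X, φ_X, φ_X, ← mat_j]

lemma e_cancel {f g : Matrix (Fin 2) (Fin 2) ℚ →ₐ[ℚ] M2H δ}
    (h : f.comp e = g.comp e) : f = g := by
  refine AlgHom.ext fun x => ?_
  obtain ⟨y, rfl⟩ := esurj x
  exact AlgHom.congr_fun h y

lemma phi_psi0 : (φ δ).comp (ψ0 δ) = (E0 δ).symm.toAlgHom := by
  apply Algebra.TensorProduct.ext
  · apply QuaternionAlgebra.hom_ext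
    · simp only [AlgHom.comp_apply, QuaternionAlgebra.Basis.i_self,
        Algebra.TensorProduct.includeLeft_apply, AlgEquiv.coe_toAlgHom]
      rw [ψ0_tmul, map_one, mul_one, show (⟨0,1,0,0⟩ : ℍ[ℚ,-1,δ]) = iH δ from rfl, ψH_i,
        φ_Iel, E0_symm_tmul, Matrix.map_one _ (map_zero _) (map_one _)]
    · simp only [AlgHom.comp_apply, QuaternionAlgebra.Basis.j_self,
        Algebra.TensorProduct.includeLeft_apply, AlgEquiv.coe_toAlgHom]
      rw [ψ0_tmul, map_one, mul_one, show (⟨0,0,1,0⟩ : ℍ[ℚ,-1,δ]) = jH δ from rfl, ψH_j,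
        φ_Jel, E0_symm_tmul, Matrix.map_one _ (map_zero _) (map_one _)]
  · apply e_cancel
    apply QuaternionAlgebra.hom_ext
    · simp only [AlgHom.comp_apply, QuaternionAlgebra.Basis.i_self,
        Algebra.TensorProduct.includeRight_apply, AlgEquiv.coe_toAlgHom,
        AlgHom.restrictScalars_apply, AlgHom.comp_apply]
      rw [e_i, ψ0_tmul, map_one, one_mul, ψM_i, φ_X, E0_symm_tmul, ← V1_eq]
    · simp only [AlgHom.comp_apply, QuaternionAlgebra.Basis.j_self,
        Algebra.TensorProduct.includeRight_apply, AlgEquiv.coe_toAlgHom,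
        AlgHom.restrictScalars_apply, AlgHom.comp_apply]
      rw [e_j, ψ0_tmul, map_one, one_mul, ψM_j, φ_X, E0_symm_tmul, ← V2_eq]

lemma phi_psi : (φ δ).comp (ψ δ) = AlgHom.id ℚ (M2H δ) := by
  refine AlgHom.ext fun x => ?_
  have h := AlgHom.congr_fun (phi_psi0 δ) ((E0 δ) x)
  show φ δ (ψ0 δ ((E0 δ) x)) = x
  rw [show φ δ (ψ0 δ ((E0 δ) x)) = ((φ δ).comp (ψ0 δ)) ((E0 δ) x) from rfl, h]
  exact (E0 δ).symm_apply_apply x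

noncomputable def finalEquiv : even (Qf δ) ≃ₐ[ℚ] M2H δ :=
  AlgEquiv.ofAlgHom (φ δ) (ψ δ) (phi_psi δ) (psi_phi δ)

end Stmt17Aux

open Stmt17Aux in
theorem stmt17 (Δ : ℤ) (hΔ : 0 < Δ) :
    Nonempty
      (↥(CliffordAlgebra.even
          (QuadraticMap.weightedSumSquares ℚ
            ![(2 : ℚ), -2, -2, -2, 2 * (Δ : ℚ)])) ≃ₐ[ℚ]
        Matrix (Fin 2) (Fin 2) ℍ[ℚ, -1, (Δ : ℚ)]) :=
  ⟨finalEquiv (Δ : ℚ)⟩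
end
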